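/- arXiv:1511.01813 — 4 statements merged into one kernel-verified Lean document; each statement's English description precedes it below -/
import Mathlib

section
/- For the simple symmetric random walk on ℤ, the first passage time τ_1 to level 1 satisfies the tail asymptotic: n^{1/2} · P(τ_1 > n) converges to √(2/π) as n → ∞. -/
namespace SRWTail
open Filter Real Topology

def val (b : Bool) : ℤ := if b then 1 else -1
lemma val_not (b : Bool) : val (!b) = - val b := by cases b <;> simp [val]

def psum {n : ℕ} (ε : Fin n → Bool) (k : ℕ) : ℤ :=
  ∑ i ∈ Finset.range k, if h : i < n then val (ε ⟨i, h⟩) else 0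
def T {n : ℕ} (ε : Fin n → Bool) : ℕ := (Finset.univ.filter fun i => ε i = true).card

lemma psum_zero {n : ℕ} (ε : Fin n → Bool) : psum ε 0 = 0 := by simp [psum]

lemma psum_succ {n : ℕ} (ε : Fin n → Bool) {k : ℕ} (hk : k < n) :
    psum ε (k + 1) = psum ε k + val (ε ⟨k, hk⟩) := by
  simp [psum, Finset.sum_range_succ, hk]

lemma exists_hit {n : ℕ} (ε : Fin n → Bool) :
    ∀ m, m ≤ n → 1 ≤ psum ε m → ∃ k ≤ m, psum ε k = 1 := by
  intro m
  induction m with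
  | zero => intro _ h; simp [psum_zero] at h
  | succ m ih =>
    intro hm h
    by_cases h1 : psum ε (m+1) = 1
    · exact ⟨m+1, le_refl _, h1⟩
    · have hmn : m < n := hm
      have hstep := psum_succ ε hmn
      have hv : val (ε ⟨m, hmn⟩) = 1 ∨ val (ε ⟨m, hmn⟩) = -1 := by
        cases (ε ⟨m, hmn⟩) <;> simp [val]
      have : 1 ≤ psum ε m := by rcases hv with hv | hv <;> omega
      obtain ⟨k, hk, hk1⟩ := ih (le_of_lt hm) this
      exact ⟨k, le_trans hk (Nat.le_succ m), hk1⟩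

def Hit {n : ℕ} (ε : Fin n → Bool) : Prop := ∃ k, k ≤ n ∧ psum ε k = 1

instance {n : ℕ} : DecidablePred (Hit (n := n)) := fun ε => by
  unfold Hit; infer_instance

def refl {n : ℕ} (ε : Fin n → Bool) : Fin n → Bool :=
  if h : Hit ε then
    fun i => if (i : ℕ) < Nat.find h then ε i else !(ε i)
  else ε

lemma refl_apply {n : ℕ} {ε : Fin n → Bool} (h : Hit ε) (i : Fin n) :
    refl ε i = if (i : ℕ) < Nat.find h then ε i else !(ε i) := by
  unfold refl; rw [dif_pos h]

lemma psum_refl_of_le {n : ℕ} {ε : Fin n → Bool} (h : Hit ε) {k : ℕ}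
    (hk : k ≤ Nat.find h) : psum (refl ε) k = psum ε k := by
  unfold psum
  refine Finset.sum_congr rfl fun i hi => ?_
  rw [Finset.mem_range] at hi
  split
  · rw [refl_apply h, if_pos]
    simp only [Fin.val_mk]; omega
  · rfl

lemma psum_refl_of_ge {n : ℕ} {ε : Fin n → Bool} (h : Hit ε) {k : ℕ}
    (hk : Nat.find h ≤ k) (hkn : k ≤ n) :
    psum (refl ε) k = 2 - psum ε k := by
  induction k, hk using Nat.le_induction with
  | base =>
    rw [psum_refl_of_le h (le_refl _), (Nat.find_spec h).2]; norm_num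
  | succ k hk ih =>
    have hkn' : k < n := hkn
    rw [psum_succ _ hkn', psum_succ _ hkn', ih (le_of_lt hkn')]
    have hr : refl ε ⟨k, hkn'⟩ = !(ε ⟨k, hkn'⟩) := by
      rw [refl_apply h, if_neg]
      simp only [Fin.val_mk]; omega
    rw [hr, val_not]; ring

lemma hit_refl {n : ℕ} {ε : Fin n → Bool} (h : Hit ε) : Hit (refl ε) :=
  ⟨Nat.find h, (Nat.find_spec h).1, by
    rw [psum_refl_of_le h (le_refl _)]; exact (Nat.find_spec h).2⟩

lemma find_refl {n : ℕ} {ε : Fin n → Bool} (h : Hit ε) :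
    Nat.find (hit_refl h) = Nat.find h := by
  have h1 := Nat.find_spec (hit_refl h)
  refine le_antisymm (Nat.find_le ⟨(Nat.find_spec h).1, ?_⟩) ?_
  · rw [psum_refl_of_le h (le_refl _)]; exact (Nat.find_spec h).2
  · by_contra hc
    push_neg at hc
    have h2 := Nat.find_min h hc
    have h3 : psum (refl ε) (Nat.find (hit_refl h)) = psum ε (Nat.find (hit_refl h)) :=
      psum_refl_of_le h (le_of_lt hc)
    exact h2 ⟨h1.1, by rw [← h3]; exact h1.2⟩

lemma refl_refl {n : ℕ} {ε : Fin n → Bool} (h : Hit ε) : refl (refl ε) = ε := by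
  funext i
  rw [refl_apply (hit_refl h), find_refl h, refl_apply h]
  by_cases hi : (i : ℕ) < Nat.find h <;> simp [hi]

lemma T_le {n : ℕ} (ε : Fin n → Bool) : T ε ≤ n := by
  unfold T
  calc _ ≤ (Finset.univ : Finset (Fin n)).card := Finset.card_filter_le _ _
  _ = n := by simp

lemma psum_top {n : ℕ} (ε : Fin n → Bool) : psum ε n = ∑ i : Fin n, val (ε i) := by
  rw [psum, ← Fin.sum_univ_eq_sum_range (fun i => if h : i < n then val (ε ⟨i, h⟩) else 0) n]
  refine Finset.sum_congr rfl fun i _ => ?_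
  rw [dif_pos i.isLt]

lemma psum_top_eq {n : ℕ} (ε : Fin n → Bool) : psum ε n = 2 * (T ε : ℤ) - n := by
  rw [psum_top]
  rw [← Finset.sum_filter_add_sum_filter_not Finset.univ (fun i => ε i = true)]
  have h1 : ∑ i ∈ Finset.univ.filter (fun i => ε i = true), val (ε i) = (T ε : ℤ) := by
    have : ∀ i ∈ Finset.univ.filter (fun i : Fin n => ε i = true), val (ε i) = 1 := by
      intro i hi; rw [Finset.mem_filter] at hi; simp [val, hi.2]
    rw [Finset.sum_congr rfl this, Finset.sum_const, T]; simp
  have hcard : (Finset.univ.filter fun i => ¬ ε i = true).card = n - T ε := by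
    have := Finset.card_filter_add_card_filter_not
      (s := (Finset.univ : Finset (Fin n))) (p := fun i => ε i = true)
    simp only [Finset.card_univ, Fintype.card_fin] at this
    unfold T; omega
  have h2 : ∑ i ∈ Finset.univ.filter (fun i => ¬ ε i = true), val (ε i)
      = -((n : ℤ) - T ε) := by
    have : ∀ i ∈ Finset.univ.filter (fun i : Fin n => ¬ ε i = true), val (ε i) = -1 := by
      intro i hi; rw [Finset.mem_filter] at hi
      simp only [Bool.not_eq_true] at hi; simp [val, hi.2]
    rw [Finset.sum_congr rfl this, Finset.sum_const, hcard, nsmul_eq_mul]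
    push_cast [Nat.cast_sub (T_le ε)]; ring
  rw [h1, h2]; ring

lemma card_T_eq (n m : ℕ) :
    (Finset.univ.filter fun ε : Fin n → Bool => T ε = m).card = n.choose m := by
  have : n.choose m = (Finset.powersetCard m (Finset.univ : Finset (Fin n))).card := by
    rw [Finset.card_powersetCard, Finset.card_univ, Fintype.card_fin]
  rw [this]
  refine Finset.card_bij' (fun ε _ => Finset.univ.filter fun i => ε i = true)
    (fun s _ => fun i => decide (i ∈ s)) ?_ ?_ ?_ ?_
  · intro ε hε
    rw [Finset.mem_filter] at hε
    rw [Finset.mem_powersetCard]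
    exact ⟨Finset.filter_subset _ _, hε.2⟩
  · intro s hs
    rw [Finset.mem_powersetCard] at hs
    rw [Finset.mem_filter]
    refine ⟨Finset.mem_univ _, ?_⟩
    simp only [T, decide_eq_true_eq]
    rw [Finset.filter_univ_mem]
    exact hs.2
  · intro ε hε
    funext i
    by_cases h : ε i = true <;> simp [h]
  · intro s hs
    ext i; simp

lemma psum_neg {n : ℕ} (ε : Fin n → Bool) (k : ℕ) :
    psum (fun i => !(ε i)) k = - psum ε k := by
  unfold psum
  rw [← Finset.sum_neg_distrib]
  refine Finset.sum_congr rfl fun i hi => ?_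
  split
  · exact val_not _
  · simp

theorem count_good (n : ℕ) :
    (Finset.univ.filter fun ε : Fin n → Bool => ∀ k ≤ n, psum ε k ≠ 1).card
      = n.choose (n / 2) := by
  classical
  -- not hit implies endpoint ≤ 0
  have hend : ∀ ε : Fin n → Bool, ¬ Hit ε → psum ε n ≤ 0 := by
    intro ε h
    by_contra hc
    push_neg at hc
    obtain ⟨k, hk, h1⟩ := exists_hit ε n le_rfl hc
    exact h ⟨k, hk, h1⟩
  have hhit2 : ∀ ε : Fin n → Bool, 2 ≤ psum ε n → Hit ε := by
    intro ε h
    obtain ⟨k, hk, h1⟩ := exists_hit ε n le_rfl (by omega)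
    exact ⟨k, hk, h1⟩
  -- replace predicate by ¬ Hit
  have e0 : (Finset.univ.filter fun ε : Fin n → Bool => ∀ k ≤ n, psum ε k ≠ 1)
      = Finset.univ.filter fun ε => ¬ Hit ε := by
    refine Finset.filter_congr fun ε _ => ?_
    unfold Hit; push_neg; rfl
  rw [e0]
  set A := Finset.univ.filter fun ε : Fin n → Bool => ¬ Hit ε with hA
  set B := Finset.univ.filter fun ε : Fin n → Bool => psum ε n ≤ 0 with hB
  set C := Finset.univ.filter fun ε : Fin n → Bool => psum ε n ≤ 0 ∧ Hit ε with hC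
  set D := Finset.univ.filter fun ε : Fin n → Bool => 2 ≤ psum ε n with hD
  set E := Finset.univ.filter fun ε : Fin n → Bool => psum ε n ≤ -2 with hE
  set F := Finset.univ.filter fun ε : Fin n → Bool => T ε = n / 2 with hF
  have hBsplit : B.card = C.card + A.card := by
    have := Finset.card_filter_add_card_filter_not
      (s := B) (p := fun ε => Hit ε)
    rw [hB, Finset.filter_filter, Finset.filter_filter] at this
    rw [hB, hC, hA]
    rw [← this]
    congr 2
    refine Finset.filter_congr fun ε _ => ?_
    constructor
    · exact fun h => h.2
    · exact fun h => ⟨hend ε h, h⟩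
  have hCD : C.card = D.card := by
    refine Finset.card_bij' (fun ε _ => refl ε) (fun ε _ => refl ε) ?_ ?_ ?_ ?_
    · intro ε hε
      rw [hC, Finset.mem_filter] at hε
      rw [hD, Finset.mem_filter]
      refine ⟨Finset.mem_univ _, ?_⟩
      rw [psum_refl_of_ge hε.2.2 (Nat.find_spec hε.2.2).1 le_rfl]
      omega
    · intro ε hε
      rw [hD, Finset.mem_filter] at hε
      have h := hhit2 ε hε.2
      rw [hC, Finset.mem_filter]
      refine ⟨Finset.mem_univ _, ?_, hit_refl h⟩
      rw [psum_refl_of_ge h (Nat.find_spec h).1 le_rfl]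
      omega
    · intro ε hε
      rw [hC, Finset.mem_filter] at hε
      exact refl_refl hε.2.2
    · intro ε hε
      rw [hD, Finset.mem_filter] at hε
      exact refl_refl (hhit2 ε hε.2)
  have hDE : D.card = E.card := by
    refine Finset.card_bij' (fun ε _ => fun i => !(ε i)) (fun ε _ => fun i => !(ε i))
      ?_ ?_ ?_ ?_
    · intro ε hε
      rw [hD, Finset.mem_filter] at hε
      rw [hE, Finset.mem_filter]
      refine ⟨Finset.mem_univ _, ?_⟩
      rw [psum_neg]; omega
    · intro ε hε
      rw [hE, Finset.mem_filter] at hε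
      rw [hD, Finset.mem_filter]
      refine ⟨Finset.mem_univ _, ?_⟩
      rw [psum_neg]; omega
    · intro ε _; funext i; simp
    · intro ε _; funext i; simp
  have hBEF : B.card = E.card + F.card := by
    have := Finset.card_filter_add_card_filter_not
      (s := B) (p := fun ε => psum ε n ≤ -2)
    rw [hB, Finset.filter_filter, Finset.filter_filter] at this
    rw [hB, hE, hF, ← this]
    congr 2
    · refine Finset.filter_congr fun ε _ => ?_
      constructor
      · exact fun h => h.2
      · exact fun h => ⟨by omega, h⟩
    · refine Finset.filter_congr fun ε _ => ?_
      rw [psum_top_eq]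
      have := T_le ε
      constructor
      · intro h; omega
      · intro h; omega
  have := card_T_eq n (n / 2)
  rw [← hF] at this
  omega

noncomputable def fseq (n : ℕ) : ℝ := Real.sqrt n * ((n.choose (n / 2) : ℝ) / 2 ^ n)

lemma key_even (m : ℕ) (hm : 1 ≤ m) :
    Real.sqrt (2 * m) * (((2 * m).choose m : ℝ) / 2 ^ (2 * m))
      = Real.sqrt 2 * (Stirling.stirlingSeq (2 * m) / Stirling.stirlingSeq m ^ 2) := by
  have hm0 : (0 : ℝ) < m := by exact_mod_cast hm
  have he : (0 : ℝ) < Real.exp 1 := Real.exp_pos 1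
  have hB : (0 : ℝ) < (m.factorial : ℝ) := by exact_mod_cast m.factorial_pos
  set e1 := Real.exp 1 with he1
  set q := ((m : ℝ) / e1) ^ m with hq
  set u := Real.sqrt (2 * (m : ℝ)) with hu
  have hq0 : 0 < q := by rw [hq]; positivity
  have hu0 : 0 < u := by rw [hu]; positivity
  have hu2 : u * u = 2 * (m : ℝ) := Real.mul_self_sqrt (by positivity)
  have h1 : Stirling.stirlingSeq m = (m.factorial : ℝ) / (u * q) := by
    rw [Stirling.stirlingSeq]
  have h2 : Stirling.stirlingSeq (2 * m) = ((2 * m).factorial : ℝ) / (Real.sqrt 2 * u * (4 ^ m * q ^ 2)) := by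
    rw [Stirling.stirlingSeq]
    have hc : (2 * ((2 * m : ℕ) : ℝ)) = 2 * (2 * (m : ℝ)) := by push_cast; ring
    rw [hc, Real.sqrt_mul (by norm_num : (0:ℝ) ≤ 2)]
    have hpow : (((2 * m : ℕ) : ℝ) / e1) ^ (2 * m) = 4 ^ m * q ^ 2 := by
      push_cast
      rw [show (2 * (m : ℝ)) / e1 = 2 * ((m : ℝ) / e1) by ring, mul_pow,
        show ((2:ℝ)) ^ (2*m) = 4 ^ m by rw [pow_mul]; norm_num,
        pow_mul' ((m:ℝ)/e1) 2 m, ← hq]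
    rw [hpow]
  have hcast : (((2 * m).choose m : ℝ)) = ((2 * m).factorial : ℝ) / ((m.factorial : ℝ) * (m.factorial : ℝ)) := by
    rw [Nat.cast_choose ℝ (by omega : m ≤ 2 * m), show 2 * m - m = m from by omega]
  have h4 : (2 : ℝ) ^ (2 * m) = 4 ^ m := by
    rw [pow_mul]; norm_num
  rw [h1, h2, hcast, h4]
  have hs2 : (0:ℝ) < Real.sqrt 2 := by positivity
  field_simp

lemma sqrt_lim : Real.sqrt 2 * (Real.sqrt π / Real.sqrt π ^ 2) = Real.sqrt (2 / π) := by
  have hs : Real.sqrt π ≠ 0 := ne_of_gt (Real.sqrt_pos.2 Real.pi_pos)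
  rw [Real.sqrt_div (by norm_num : (0:ℝ) ≤ 2), sq, div_mul_cancel_left₀ hs, ← div_eq_mul_inv]

lemma tendsto_ratio :
    Tendsto (fun m : ℕ => Real.sqrt 2 * (Stirling.stirlingSeq (2*m) / Stirling.stirlingSeq m ^ 2))
      atTop (𝓝 (Real.sqrt (2/π))) := by
  rw [← sqrt_lim]
  have hst := Stirling.tendsto_stirlingSeq_sqrt_pi
  have h2 : Tendsto (fun m : ℕ => 2 * m) atTop atTop :=
    tendsto_atTop_mono (fun n => by simp [two_mul]) tendsto_id
  exact ((hst.comp h2).div (hst.pow 2) (by positivity)).const_mul _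

lemma tendsto_even : Tendsto (fun m : ℕ => fseq (2*m)) atTop (𝓝 (Real.sqrt (2/π))) := by
  refine Tendsto.congr' ?_ tendsto_ratio
  filter_upwards [eventually_ge_atTop 1] with m hm
  rw [fseq, Nat.mul_div_cancel_left m (by norm_num : 0 < 2), ← key_even m hm]
  push_cast
  ring

lemma choose_odd (m : ℕ) :
    ((2*m+1).choose m : ℝ) * (m+1) = (2*m+1) * ((2*m).choose m : ℝ) := by
  have h1 : (2*m).succ * (2*m).choose m = (2*m+1).choose (m+1) * (m+1) :=
    Nat.add_one_mul_choose_eq (2*m) m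
  have h2 : (2*m+1).choose (m+1) = (2*m+1).choose m := by
    have := Nat.choose_symm (by omega : m+1 ≤ 2*m+1)
    rw [show 2*m+1 - (m+1) = m from by omega] at this
    exact this.symm
  rw [← h2]
  exact_mod_cast h1.symm

lemma tendsto_aux1 : Tendsto (fun m : ℕ => ((2*(m:ℝ)+1))/(2*m)) atTop (𝓝 1) := by
  have h : Tendsto (fun m : ℕ => 1 + (1/2) * (1/(m:ℝ))) atTop (𝓝 (1 + (1/2) * 0)) :=
    tendsto_const_nhds.add (tendsto_one_div_atTop_nhds_zero_nat.const_mul _)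
  norm_num at h
  refine Tendsto.congr' ?_ h
  filter_upwards [eventually_ge_atTop 1] with m hm
  have hm0 : (m:ℝ) ≠ 0 := Nat.cast_ne_zero.2 (by omega)
  field_simp
  try ring

lemma tendsto_aux2 : Tendsto (fun m : ℕ => ((2*(m:ℝ)+1))/(2*m+2)) atTop (𝓝 1) := by
  have h : Tendsto (fun m : ℕ => 1 - (1/2) * (1/((m:ℝ)+1))) atTop (𝓝 (1 - (1/2) * 0)) :=
    tendsto_const_nhds.sub (tendsto_one_div_add_atTop_nhds_zero_nat.const_mul _)
  norm_num at h
  refine Tendsto.congr' ?_ h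
  filter_upwards [eventually_ge_atTop 1] with m hm
  have hm0 : (m:ℝ)+1 ≠ 0 := by positivity
  field_simp
  try ring

lemma tendsto_sqrt_aux : Tendsto (fun m : ℕ => Real.sqrt ((2*(m:ℝ)+1)/(2*m))) atTop (𝓝 1) := by
  have h := (Real.continuous_sqrt.tendsto 1).comp tendsto_aux1
  simp only [Function.comp_def, Real.sqrt_one] at h
  exact h

lemma tendsto_odd : Tendsto (fun m : ℕ => fseq (2*m+1)) atTop (𝓝 (Real.sqrt (2/π))) := by
  have hprod : Tendsto
      (fun m : ℕ => fseq (2*m) * (Real.sqrt ((2*(m:ℝ)+1)/(2*m)) * ((2*(m:ℝ)+1)/(2*m+2))))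
      atTop (𝓝 (Real.sqrt (2/π) * (1 * 1))) :=
    tendsto_even.mul (tendsto_sqrt_aux.mul tendsto_aux2)
  rw [one_mul, mul_one] at hprod
  refine Tendsto.congr' ?_ hprod
  filter_upwards [eventually_ge_atTop 1] with m hm
  have hm0 : (0:ℝ) < m := by exact_mod_cast hm
  have hC := choose_odd m
  have hu0 : (0:ℝ) < Real.sqrt (2*(m:ℝ)) := Real.sqrt_pos.2 (by positivity)
  have hsq : Real.sqrt (2*(m:ℝ)) * Real.sqrt ((2*(m:ℝ)+1)/(2*(m:ℝ)))
      = Real.sqrt (2*(m:ℝ)+1) := by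
    rw [Real.sqrt_div (by positivity : (0:ℝ) ≤ 2*(m:ℝ)+1), mul_comm,
      div_mul_cancel₀ _ (ne_of_gt hu0)]
  rw [fseq, fseq, Nat.mul_div_cancel_left m (by norm_num : 0 < 2),
    show (2*m+1)/2 = m from by omega]
  push_cast
  rw [show (2:ℝ)^(2*m+1) = 2 * 2^(2*m) from by rw [pow_succ]; ring]
  have hrearr : Real.sqrt (2*(m:ℝ)) * ((((2*m).choose m : ℕ) : ℝ)/2^(2*m))
        * (Real.sqrt ((2*(m:ℝ)+1)/(2*(m:ℝ))) * ((2*(m:ℝ)+1)/(2*(m:ℝ)+2)))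
      = (Real.sqrt (2*(m:ℝ)) * Real.sqrt ((2*(m:ℝ)+1)/(2*(m:ℝ))))
        * ((((2*m).choose m : ℕ) : ℝ)/2^(2*m) * ((2*(m:ℝ)+1)/(2*(m:ℝ)+2))) := by
    ring
  rw [hrearr, hsq]
  congr 1
  have hp : (0:ℝ) < 2^(2*m) := by positivity
  field_simp
  nlinarith [hC]

lemma tendsto_even_odd {f : ℕ → ℝ} {L : ℝ}
    (he : Tendsto (fun m => f (2*m)) atTop (𝓝 L))
    (ho : Tendsto (fun m => f (2*m+1)) atTop (𝓝 L)) : Tendsto f atTop (𝓝 L) := by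
  rw [Filter.tendsto_atTop'] at he ho ⊢
  intro s hs
  obtain ⟨N1, h1⟩ := he s hs
  obtain ⟨N2, h2⟩ := ho s hs
  refine ⟨2 * (max N1 N2) + 1, fun n hn => ?_⟩
  rcases Nat.even_or_odd n with ⟨m, hm⟩ | ⟨m, hm⟩
  · have h : 2*m = n := by omega
    have := h1 m (by omega)
    rwa [h] at this
  · have h : 2*m+1 = n := by omega
    have := h2 m (by omega)
    rwa [h] at this

theorem tendsto_fseq : Tendsto fseq atTop (𝓝 (Real.sqrt (2/π))) :=
  tendsto_even_odd tendsto_even tendsto_odd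

end SRWTail

open scoped ENNReal



open MeasureTheory ProbabilityTheory Filter

/-- For the simple symmetric random walk on ℤ, the first passage time
`τ₁ = inf{n ≥ 1 : S_n = 1}` satisfies the tail asymptotic
`n^{1/2} · P(τ₁ > n) → √(2/π)` as `n → ∞`.  (`τ₁ > n` means `S_k ≠ 1` for all `k ≤ n`.) -/
theorem srw_first_passage_tail
    {Ω : Type*} [MeasurableSpace Ω] (P : Measure Ω) [IsProbabilityMeasure P]
    (X : ℕ → Ω → ℤ) (hmeas : ∀ i, Measurable (X i))
    (hindep : iIndepFun X P)
    (hplus : ∀ i, P {ω | X i ω = 1} = 1/2)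
    (hminus : ∀ i, P {ω | X i ω = -1} = 1/2)
    (S : ℕ → Ω → ℤ) (hS : ∀ n ω, S n ω = ∑ i ∈ Finset.range n, X i ω) :
    Tendsto (fun n : ℕ => Real.sqrt n * (P {ω | ∀ k ≤ n, S k ω ≠ 1}).toReal)
      atTop (nhds (Real.sqrt (2 / Real.pi))) := by
  have key : ∀ n : ℕ, (P {ω | ∀ k ≤ n, S k ω ≠ 1})
      = (n.choose (n / 2) : ℝ≥0∞) * (2⁻¹ : ℝ≥0∞) ^ n := by
    intro n
    set sets : (Fin n → Bool) → ℕ → Set ℤ :=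
      fun ε i => if h : i < n then {SRWTail.val (ε ⟨i, h⟩)} else Set.univ with hsets
    set A : (Fin n → Bool) → Set Ω := fun ε => ⋂ i ∈ Finset.range n, X i ⁻¹' (sets ε i) with hA
    have memA : ∀ ε ω, ω ∈ A ε ↔ ∀ (i : ℕ) (h : i < n), X i ω = SRWTail.val (ε ⟨i, h⟩) := by
      intro ε ω
      simp only [hA, Set.mem_iInter, Finset.mem_range, Set.mem_preimage, hsets]
      constructor
      · intro h i hi; have := h i hi; rw [dif_pos hi] at this; simpa using this
      · intro h i hi; rw [dif_pos hi]; simpa using h i hi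
    have hsets_meas : ∀ ε, ∀ i ∈ Finset.range n, MeasurableSet (sets ε i) := by
      intro ε i _
      simp only [hsets]
      split
      · exact measurableSet_singleton _
      · exact MeasurableSet.univ
    have hPA : ∀ ε, P (A ε) = (2⁻¹ : ℝ≥0∞) ^ n := by
      intro ε
      rw [hA]
      rw [hindep.measure_inter_preimage_eq_mul (Finset.range n) (hsets_meas ε)]
      have hfac : ∀ i ∈ Finset.range n, P (X i ⁻¹' sets ε i) = (2⁻¹ : ℝ≥0∞) := by
        intro i hi
        rw [Finset.mem_range] at hi
        have hpre : X i ⁻¹' (sets ε i) = {ω | X i ω = SRWTail.val (ε ⟨i, hi⟩)} := by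
          rw [hsets]; ext ω; simp [dif_pos hi]
        rw [hpre]
        cases hb : (ε ⟨i, hi⟩)
        · simpa [SRWTail.val, one_div] using hminus i
        · simpa [SRWTail.val, one_div] using hplus i
      rw [Finset.prod_congr rfl hfac, Finset.prod_const, Finset.card_range]
    have hmeasA : ∀ ε, MeasurableSet (A ε) := by
      intro ε
      rw [hA]
      exact MeasurableSet.biInter (Finset.range n).countable_toSet
        (fun i hi => (hmeas i) (hsets_meas ε i hi))
    have hdisj : ∀ ε ε' : Fin n → Bool, ε ≠ ε' → Disjoint (A ε) (A ε') := by
      intro ε ε' hne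
      obtain ⟨i, hi⟩ := Function.ne_iff.1 hne
      rw [Set.disjoint_left]
      intro ω hω hω'
      have h1 := (memA ε ω).1 hω i.1 i.2
      have h2 := (memA ε' ω).1 hω' i.1 i.2
      rw [Fin.eta] at h1 h2
      apply hi
      cases hb : (ε i) <;> cases hb' : (ε' i) <;>
        simp_all [SRWTail.val]
    -- the sum-relation on A ε
    have hSA : ∀ ε ω, ω ∈ A ε → ∀ k ≤ n, S k ω = SRWTail.psum ε k := by
      intro ε ω hω k hk
      rw [hS]
      unfold SRWTail.psum
      refine Finset.sum_congr rfl fun i hi => ?_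
      rw [Finset.mem_range] at hi
      have hin : i < n := lt_of_lt_of_le hi hk
      rw [dif_pos hin]
      exact (memA ε ω).1 hω i hin
    set Good : Finset (Fin n → Bool) :=
      Finset.univ.filter (fun ε => ∀ k ≤ n, SRWTail.psum ε k ≠ 1) with hGood
    set U : Set Ω := ⋃ ε ∈ Good, A ε with hU
    set E : Set Ω := {ω | ∀ k ≤ n, S k ω ≠ 1} with hE
    set N : Set Ω := ⋃ i ∈ Finset.range n, {ω | X i ω ≠ 1 ∧ X i ω ≠ -1} with hN
    have hUE : U ⊆ E := by
      rw [hU]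
      refine Set.iUnion₂_subset fun ε hε => ?_
      intro ω hω
      rw [hGood, Finset.mem_filter] at hε
      intro k hk
      rw [hSA ε ω hω k hk]
      exact hε.2 k hk
    have hEUN : E ⊆ U ∪ N := by
      intro ω hω
      by_cases hb : ∀ i, i < n → (X i ω = 1 ∨ X i ω = -1)
      · left
        set ε : Fin n → Bool := fun i => decide (X i ω = 1) with hε
        have hωA : ω ∈ A ε := by
          rw [memA]
          intro i hi
          rcases hb i hi with h1 | h1
          · rw [hε]; simp [h1, SRWTail.val]
          · rw [hε]
            have : ¬ (X i ω = 1) := by rw [h1]; decide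
            simp [h1, this, SRWTail.val]
        have hgood : ε ∈ Good := by
          rw [hGood, Finset.mem_filter]
          refine ⟨Finset.mem_univ _, fun k hk => ?_⟩
          rw [← hSA ε ω hωA k hk]
          exact hω k hk
        rw [hU]
        exact Set.mem_biUnion hgood hωA
      · right
        push_neg at hb
        obtain ⟨i, hi, h1, h2⟩ := hb
        rw [hN]
        exact Set.mem_biUnion (Finset.mem_range.2 hi) ⟨h1, h2⟩
    have hB : ∀ i, P {ω | X i ω ≠ 1 ∧ X i ω ≠ -1} = 0 := by
      intro i
      have hm1 : MeasurableSet {ω | X i ω = 1} := hmeas i (measurableSet_singleton 1)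
      have hm2 : MeasurableSet {ω | X i ω = -1} := hmeas i (measurableSet_singleton (-1))
      have hd : Disjoint {ω | X i ω = 1} {ω | X i ω = -1} := by
        rw [Set.disjoint_left]
        intro ω h1 h2
        simp only [Set.mem_setOf_eq] at h1 h2
        omega
      have hu : P ({ω | X i ω = 1} ∪ {ω | X i ω = -1}) = 1 := by
        rw [measure_union hd hm2, hplus, hminus]
        rw [ENNReal.div_add_div_same]
        norm_num
        exact ENNReal.div_self (by norm_num) (by norm_num)
      have hcompl : {ω | X i ω ≠ 1 ∧ X i ω ≠ -1}
          = ({ω | X i ω = 1} ∪ {ω | X i ω = -1})ᶜ := by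
        ext ω; simp [not_or]
      rw [hcompl, measure_compl (hm1.union hm2) (measure_ne_top P _), hu, measure_univ,
        tsub_self]
    have hNnull : P N = 0 := by
      refine le_antisymm ?_ zero_le
      calc P N ≤ ∑ i ∈ Finset.range n, P {ω | X i ω ≠ 1 ∧ X i ω ≠ -1} := by
            rw [hN]; exact measure_biUnion_finset_le _ _
      _ = 0 := Finset.sum_eq_zero fun i _ => hB i
    have hPU : P U = (Good.card : ℝ≥0∞) * (2⁻¹ : ℝ≥0∞) ^ n := by
      rw [hU, measure_biUnion_finset ?_ (fun ε _ => hmeasA ε)]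
      · rw [Finset.sum_congr rfl (fun ε _ => hPA ε), Finset.sum_const, nsmul_eq_mul]
      · intro ε _ ε' _ hne
        exact hdisj ε ε' hne
    have hPE : P E = P U := by
      refine le_antisymm ?_ (measure_mono hUE)
      calc P E ≤ P (U ∪ N) := measure_mono hEUN
      _ ≤ P U + P N := measure_union_le _ _
      _ = P U := by rw [hNnull, add_zero]
    have hcount : Good.card = n.choose (n / 2) := SRWTail.count_good n
    rw [hPE, hPU, hcount]
  have key2 : ∀ n : ℕ, (P {ω | ∀ k ≤ n, S k ω ≠ 1}).toReal
      = (n.choose (n / 2) : ℝ) / 2 ^ n := by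
    intro n
    rw [key n, ENNReal.toReal_mul, ENNReal.toReal_pow]
    norm_num
    rw [one_div, inv_pow, div_eq_mul_inv]
  refine SRWTail.tendsto_fseq.congr fun n => ?_
  rw [SRWTail.fseq, key2 n]
end

section
/- In Bernoulli site percolation on ℤ^d, if P(x ∈ C) = θ > 0 for all x (translation invariance) and the infinite open cluster C is unique a.s., then for any infinite A ⊆ ℤ^d, P(|C ∩ A| = ∞) = 1. -/
open MeasureTheory ProbabilityTheory Filter

/-- Nearest-neighbour adjacency on ℤ^d. -/
def latAdj (d : ℕ) (x y : Fin d → ℤ) : Prop := (∑ i : Fin d, |x i - y i|) = 1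

/-- The open cluster of the site `x` in the site configuration `o`. -/
def siteCluster (d : ℕ) (o : (Fin d → ℤ) → Prop) (x : Fin d → ℤ) : Set (Fin d → ℤ) :=
  {y | o x ∧ Relation.ReflTransGen (fun u v => latAdj d u v ∧ o u ∧ o v) x y}

namespace PercAux

variable {d : ℕ}

lemma latAdj_symm {x y : Fin d → ℤ} (h : latAdj d x y) : latAdj d y x := by
  unfold latAdj at *
  simpa [abs_sub_comm] using h

lemma open_of_mem {o : (Fin d → ℤ) → Prop} {x y : Fin d → ℤ}
    (h : y ∈ siteCluster d o x) : o y := by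
  obtain ⟨hx, hr⟩ := h
  induction hr with
  | refl => exact hx
  | tail _ h2 _ => exact h2.2.2

lemma mem_self {o : (Fin d → ℤ) → Prop} {x : Fin d → ℤ} (h : o x) :
    x ∈ siteCluster d o x := ⟨h, Relation.ReflTransGen.refl⟩

lemma rel_symm (o : (Fin d → ℤ) → Prop) :
    Symmetric (fun u v => latAdj d u v ∧ o u ∧ o v) := by
  intro u v ⟨h1, h2, h3⟩
  exact ⟨latAdj_symm h1, h3, h2⟩

lemma cluster_eq_of_mem {o : (Fin d → ℤ) → Prop} {x y : Fin d → ℤ}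
    (h : y ∈ siteCluster d o x) : siteCluster d o y = siteCluster d o x := by
  obtain ⟨hx, hr⟩ := h
  have hy : o y := open_of_mem ⟨hx, hr⟩
  have hsym : Symmetric (Relation.ReflTransGen (fun u v => latAdj d u v ∧ o u ∧ o v)) := by
    haveI : Std.Symm (fun u v => latAdj d u v ∧ o u ∧ o v) := ⟨rel_symm (d := d) o⟩
    exact fun a b h => Std.Symm.symm a b h
  ext z
  constructor
  · rintro ⟨-, hz⟩
    exact ⟨hx, hr.trans hz⟩
  · rintro ⟨-, hz⟩
    exact ⟨hy, (hsym hr).trans hz⟩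

lemma cluster_mono {o o' : (Fin d → ℤ) → Prop} (h : ∀ v, o v → o' v) (x : Fin d → ℤ) :
    siteCluster d o x ⊆ siteCluster d o' x := by
  rintro y ⟨hx, hr⟩
  exact ⟨h x hx, Relation.ReflTransGen.mono (r := fun u v => latAdj d u v ∧ o u ∧ o v)
    (p := fun u v => latAdj d u v ∧ o' u ∧ o' v)
    (fun u v ⟨h1, h2, h3⟩ => ⟨h1, h u h2, h v h3⟩) x y hr⟩

lemma nbhd_finite (f : Fin d → ℤ) : {v : Fin d → ℤ | latAdj d v f}.Finite := by
  have hfin : (Set.pi Set.univ (fun i => Set.Icc (f i - 1) (f i + 1))).Finite :=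
    Set.Finite.pi (fun i => Set.finite_Icc _ _)
  refine hfin.subset ?_
  intro v hv
  have hv' : (∑ j : Fin d, |v j - f j|) = 1 := hv
  intro i _
  have h1 : |v i - f i| ≤ ∑ j : Fin d, |v j - f j| :=
    Finset.single_le_sum (f := fun j => |v j - f j|) (fun j _ => abs_nonneg _) (Finset.mem_univ i)
  rw [hv'] at h1
  simp only [Set.mem_Icc]
  rw [abs_le] at h1
  omega

/-- Removing a finite set of sites from a configuration keeps some cluster containing
infinitely many points of any infinite subset of a cluster. -/
lemma removal {o : (Fin d → ℤ) → Prop} {F : Set (Fin d → ℤ)} (hF : F.Finite)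
    {x : Fin d → ℤ} {S : Set (Fin d → ℤ)} (hS : S ⊆ siteCluster d o x) (hSinf : S.Infinite) :
    ∃ x', ((siteCluster d (fun v => o v ∧ v ∉ F) x') ∩ S).Infinite := by
  classical
  set o' : (Fin d → ℤ) → Prop := fun v => o v ∧ v ∉ F with ho'
  set N : Set (Fin d → ℤ) := insert x {v | ∃ f ∈ F, latAdj d v f} with hN
  have hNfin : N.Finite := by
    refine (Set.Finite.insert x ?_)
    have : {v : Fin d → ℤ | ∃ f ∈ F, latAdj d v f} ⊆ ⋃ f ∈ F, {v | latAdj d v f} := by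
      intro v ⟨f, hf, h⟩; exact Set.mem_biUnion hf h
    exact (hF.biUnion (fun f _ => nbhd_finite f)).subset this
  -- key claim
  have key : ∀ s ∈ S \ F, ∃ n ∈ N, n ∈ siteCluster d o' s := by
    rintro s ⟨hsS, hsF⟩
    obtain ⟨hx, hr⟩ := hS hsS
    have hos : o s := open_of_mem (hS hsS)
    suffices h : ∃ n ∈ N, Relation.ReflTransGen (fun u v => latAdj d u v ∧ o' u ∧ o' v) s n by
      obtain ⟨n, hn1, hn2⟩ := h
      exact ⟨n, hn1, ⟨⟨hos, hsF⟩, hn2⟩⟩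
    clear hsS hos
    induction hr with
    | refl => exact ⟨x, Set.mem_insert _ _, Relation.ReflTransGen.refl⟩
    | @tail u y hxu huy ih =>
      -- y ∉ F, r u y
      by_cases hu : u ∈ F
      · exact ⟨y, Set.mem_insert_of_mem _ ⟨u, hu, latAdj_symm huy.1⟩, Relation.ReflTransGen.refl⟩
      · obtain ⟨n, hn1, hn2⟩ := ih hu
        refine ⟨n, hn1, Relation.ReflTransGen.head ?_ hn2⟩
        exact ⟨latAdj_symm huy.1, ⟨huy.2.2, hsF⟩, ⟨huy.2.1, hu⟩⟩
  -- pigeonhole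
  have hSF : (S \ F).Infinite := hSinf.diff hF
  haveI : Infinite ↥(S \ F) := hSF.to_subtype
  haveI : Finite ↥N := hNfin.to_subtype
  set f : ↥(S \ F) → ↥N := fun s => ⟨Classical.choose (key s.1 s.2), (Classical.choose_spec (key s.1 s.2)).1⟩ with hf
  obtain ⟨y, hy⟩ := Finite.exists_infinite_fiber f
  have hfib : (Subtype.val '' (f ⁻¹' {y}) : Set (Fin d → ℤ)).Infinite := by
    rw [Set.infinite_coe_iff] at hy
    exact hy.image (Set.injOn_of_injective Subtype.val_injective)
  obtain ⟨s0, hs0⟩ := hfib.nonempty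
  refine ⟨s0, hfib.mono ?_⟩
  rintro s ⟨⟨s, hsSF⟩, hsfib, rfl⟩
  simp only [Set.mem_preimage, Set.mem_singleton_iff, hf] at hsfib
  obtain ⟨⟨t0, ht0SF⟩, ht0fib, rfl⟩ := hs0
  simp only [Set.mem_preimage, Set.mem_singleton_iff, hf] at ht0fib
  have hys : (y : Fin d → ℤ) ∈ siteCluster d o' s := by
    rw [← hsfib]; exact (Classical.choose_spec (key s hsSF)).2
  have hyt0 : (y : Fin d → ℤ) ∈ siteCluster d o' t0 := by
    rw [← ht0fib]; exact (Classical.choose_spec (key t0 ht0SF)).2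
  have hmem : s ∈ siteCluster d o' s :=
    mem_self ⟨open_of_mem (hS hsSF.1), hsSF.2⟩
  have : siteCluster d o' s = siteCluster d o' t0 := by
    rw [← cluster_eq_of_mem hys, ← cluster_eq_of_mem hyt0]
  refine ⟨?_, hsSF.1⟩
  rw [← this]; exact hmem

/-- The key stability: the event "some cluster meets A infinitely" is unchanged by
finite modifications of the configuration. -/
lemma stable (A : Set (Fin d → ℤ)) {c c' : (Fin d → ℤ) → Bool}
    (hF : {v | c v ≠ c' v}.Finite)
    (h : ∃ x, ((siteCluster d (fun v => c v = true) x) ∩ A).Infinite) :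
    ∃ x, ((siteCluster d (fun v => c' v = true) x) ∩ A).Infinite := by
  obtain ⟨x, hx⟩ := h
  obtain ⟨x', hx'⟩ := removal (o := fun v => c v = true) hF
    (Set.inter_subset_left (t := A)) hx
  refine ⟨x', ?_⟩
  have hsub : siteCluster d (fun v => c v = true ∧ v ∉ {v | c v ≠ c' v}) x' ⊆
      siteCluster d (fun v => c' v = true) x' := by
    refine cluster_mono ?_ x'
    rintro v ⟨h1, h2⟩
    simp only [Set.mem_setOf_eq, not_not] at h2
    rw [← h2]; exact h1
  refine hx'.mono ?_
  rintro z ⟨hz1, hz2, hz3⟩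
  exact ⟨hsub hz1, hz3⟩


lemma measurable_chain (x : Fin d → ℤ) (l : List (Fin d → ℤ)) :
    MeasurableSet {c : (Fin d → ℤ) → Bool |
      List.Chain (fun u v => latAdj d u v ∧ c u = true ∧ c v = true) x l} := by
  classical
  induction l generalizing x with
  | nil => simp [List.Chain]
  | cons b l ih =>
    have : {c : (Fin d → ℤ) → Bool |
        List.Chain (fun u v => latAdj d u v ∧ c u = true ∧ c v = true) x (b :: l)} =
        ({c : (Fin d → ℤ) → Bool | latAdj d x b ∧ c x = true ∧ c b = true} ∩
         {c | List.Chain (fun u v => latAdj d u v ∧ c u = true ∧ c v = true) b l}) := by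
      ext c; simp [List.chain_cons, List.Chain]
    rw [this]
    refine MeasurableSet.inter ?_ (ih b)
    by_cases h : latAdj d x b
    · have : {c : (Fin d → ℤ) → Bool | latAdj d x b ∧ c x = true ∧ c b = true} =
          ((fun c : (Fin d → ℤ) → Bool => c x) ⁻¹' {true}) ∩
          ((fun c : (Fin d → ℤ) → Bool => c b) ⁻¹' {true}) := by
        ext c; simp [h]
      rw [this]
      exact ((measurable_pi_apply x) (by simp)).inter ((measurable_pi_apply b) (by simp))
    · have : {c : (Fin d → ℤ) → Bool | latAdj d x b ∧ c x = true ∧ c b = true} = ∅ := by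
        ext c; simp [h]
      rw [this]; exact MeasurableSet.empty

lemma measurable_mem_cluster (x y : Fin d → ℤ) :
    MeasurableSet {c : (Fin d → ℤ) → Bool | y ∈ siteCluster d (fun v => c v = true) x} := by
  classical
  have : {c : (Fin d → ℤ) → Bool | y ∈ siteCluster d (fun v => c v = true) x} =
      ((fun c : (Fin d → ℤ) → Bool => c x) ⁻¹' {true}) ∩
      ⋃ (l : List (Fin d → ℤ)) (_ : List.getLast (x :: l) (List.cons_ne_nil _ _) = y),
        {c | List.Chain (fun u v => latAdj d u v ∧ c u = true ∧ c v = true) x l} := by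
    ext c
    simp only [Set.mem_setOf_eq, Set.mem_inter_iff, Set.mem_preimage, Set.mem_singleton_iff,
      Set.mem_iUnion]
    constructor
    · rintro ⟨hx, hr⟩
      obtain ⟨l, hl1, hl2⟩ := List.exists_isChain_cons_of_relationReflTransGen hr
      exact ⟨hx, l, hl2, hl1⟩
    · rintro ⟨hx, l, hl2, hl1⟩
      exact ⟨hx, List.relationReflTransGen_of_exists_isChain_cons l hl1 hl2⟩
  rw [this]
  refine MeasurableSet.inter ((measurable_pi_apply x) (by simp)) ?_
  exact MeasurableSet.iUnion fun l => MeasurableSet.iUnion fun _ => measurable_chain x l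

lemma measurable_cluster_inter_infinite (A : Set (Fin d → ℤ)) (x : Fin d → ℤ) :
    MeasurableSet {c : (Fin d → ℤ) → Bool |
      ((siteCluster d (fun v => c v = true) x) ∩ A).Infinite} := by
  classical
  have : {c : (Fin d → ℤ) → Bool | ((siteCluster d (fun v => c v = true) x) ∩ A).Infinite} =
      ⋂ (F : Finset (Fin d → ℤ)), ⋃ (y : Fin d → ℤ) (_ : y ∈ A ∧ y ∉ F),
        {c | y ∈ siteCluster d (fun v => c v = true) x} := by
    ext c
    simp only [Set.mem_setOf_eq, Set.mem_iInter, Set.mem_iUnion]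
    constructor
    · intro h F
      obtain ⟨y, ⟨hy1, hy2⟩, hy3⟩ := h.exists_notMem_finset F
      exact ⟨y, ⟨hy2, hy3⟩, hy1⟩
    · intro h hfin
      obtain ⟨y, ⟨hy2, hy3⟩, hy1⟩ := h hfin.toFinset
      exact hy3 (hfin.mem_toFinset.mpr ⟨hy1, hy2⟩)
  rw [this]
  exact MeasurableSet.iInter fun F => MeasurableSet.iUnion fun y =>
    MeasurableSet.iUnion fun _ => measurable_mem_cluster x y

lemma measurable_Tset (A : Set (Fin d → ℤ)) :
    MeasurableSet {c : (Fin d → ℤ) → Bool |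
      ∃ x, ((siteCluster d (fun v => c v = true) x) ∩ A).Infinite} := by
  have : {c : (Fin d → ℤ) → Bool | ∃ x, ((siteCluster d (fun v => c v = true) x) ∩ A).Infinite}
      = ⋃ x, {c | ((siteCluster d (fun v => c v = true) x) ∩ A).Infinite} := by
    ext c; simp
  rw [this]
  exact MeasurableSet.iUnion fun x => measurable_cluster_inter_infinite A x



end PercAux

/-- In Bernoulli site percolation on ℤ^d, if a.s. there is a unique infinite
open cluster `C` and `P(x ∈ C) = θ > 0` for all sites `x` (translation invariance), then
for any deterministic infinite set `A ⊆ ℤ^d`, a.s. `C ∩ A` is infinite. -/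
theorem site_percolation_infinite_cluster_meets_infinite_sets
    {d : ℕ} (hd : 1 ≤ d)
    {Ω : Type*} [MeasurableSpace Ω] (P : Measure Ω) [IsProbabilityMeasure P]
    (p : ENNReal) (hp1 : p ≤ 1)
    (σ : (Fin d → ℤ) → Ω → Bool) (hmeas : ∀ x, Measurable (σ x))
    (hindep : iIndepFun σ P)
    (hσ : ∀ x, P {ω | σ x ω = true} = p)
    (hexist : ∀ᵐ ω ∂P, ∃ x : Fin d → ℤ, (siteCluster d (fun v => σ v ω = true) x).Infinite)
    (huniq : ∀ᵐ ω ∂P, ∀ x y : Fin d → ℤ,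
      (siteCluster d (fun v => σ v ω = true) x).Infinite →
      (siteCluster d (fun v => σ v ω = true) y).Infinite →
      siteCluster d (fun v => σ v ω = true) x = siteCluster d (fun v => σ v ω = true) y)
    (θ : ENNReal) (hθ : 0 < θ)
    (hmarg : ∀ x : Fin d → ℤ,
      P {ω | (siteCluster d (fun v => σ v ω = true) x).Infinite} = θ)
    (A : Set (Fin d → ℤ)) (hA : A.Infinite) :
    P {ω | ∀ x : Fin d → ℤ, (siteCluster d (fun v => σ v ω = true) x).Infinite →
        ((siteCluster d (fun v => σ v ω = true) x) ∩ A).Infinite} = 1 := by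
  classical
  set Φ : Ω → ((Fin d → ℤ) → Bool) := fun ω v => σ v ω with hΦdef
  have hΦ : Measurable Φ := measurable_pi_lambda _ hmeas
  set Tset : Set ((Fin d → ℤ) → Bool) :=
    {c | ∃ x, ((siteCluster d (fun v => c v = true) x) ∩ A).Infinite} with hTsetdef
  set T : Set Ω := Φ ⁻¹' Tset with hTdef
  have hTmeas : MeasurableSet T := hΦ (PercAux.measurable_Tset A)
  set s : (Fin d → ℤ) → MeasurableSpace Ω :=
    fun x => MeasurableSpace.comap (σ x) inferInstance with hsdef
  have h_le : ∀ x, s x ≤ ‹MeasurableSpace Ω› := fun x => measurable_iff_comap_le.mp (hmeas x)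
  -- tail measurability
  have htail : MeasurableSet[Filter.limsup s Filter.cofinite] T := by
    rw [Filter.limsup_eq_iInf_iSup]
    rw [MeasurableSpace.measurableSet_iInf]
    intro U
    rw [MeasurableSpace.measurableSet_iInf]
    intro hU
    have hUc : (Uᶜ : Set (Fin d → ℤ)).Finite := hU
    set ΦU : Ω → ((Fin d → ℤ) → Bool) := fun ω v => if v ∈ U then σ v ω else false with hΦUdef
    have hΦUmeas : @Measurable Ω ((Fin d → ℤ) → Bool) (⨆ x ∈ U, s x) _ ΦU := by
      refine @measurable_pi_lambda _ _ _ (⨆ x ∈ U, s x) _ ΦU (fun v => ?_)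
      by_cases hv : v ∈ U
      · simp only [hΦUdef, hv, if_true]
        have hsv : @Measurable Ω Bool (s v) _ (σ v) := fun t ht => ⟨t, ht, rfl⟩
        exact hsv.le (le_iSup₂ (f := fun x _ => s x) v hv)
      · simp only [hΦUdef, hv, if_false]
        exact measurable_const
    have hdiff : ∀ ω, {v | Φ ω v ≠ ΦU ω v}.Finite := by
      intro ω
      refine hUc.subset ?_
      intro v hv
      simp only [Set.mem_setOf_eq, hΦUdef, hΦdef] at hv
      by_contra hvU
      simp only [Set.mem_compl_iff, not_not] at hvU
      simp [hvU] at hv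
    have hTeq : T = ΦU ⁻¹' Tset := by
      ext ω
      simp only [hTdef, hTsetdef, Set.mem_preimage, Set.mem_setOf_eq]
      constructor
      · intro h
        exact PercAux.stable A (hdiff ω) h
      · intro h
        refine PercAux.stable A ?_ h
        have : {v | ΦU ω v ≠ Φ ω v} = {v | Φ ω v ≠ ΦU ω v} := by
          ext v; simp [ne_comm]
        rw [this]; exact hdiff ω
    rw [hTeq]
    exact hΦUmeas (PercAux.measurable_Tset A)
  -- Kolmogorov 0-1 law
  have h01 : P T = 0 ∨ P T = 1 := by
    refine measure_zero_or_one_of_measurableSet_limsup (f := Filter.cofinite)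
      (ns := fun F : Finset (Fin d → ℤ) => (F : Set (Fin d → ℤ)))
      h_le hindep
      (fun t ht => ht.compl_mem_cofinite)
      (fun F G => ⟨F ∪ G, by simp only [Finset.coe_union]; exact Set.subset_union_left,
        by simp only [Finset.coe_union]; exact Set.subset_union_right⟩)
      (fun F => F.finite_toSet)
      (fun x => ⟨{x}, by simp⟩)
      htail
  -- lower bound θ ≤ P T
  set a : ℕ → (Fin d → ℤ) := fun n => (Set.Infinite.natEmbedding A hA n).1 with hadef
  have ha_inj : Function.Injective a := fun m n h => (Set.Infinite.natEmbedding A hA).injective (Subtype.ext h)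
  have haA : ∀ n, a n ∈ A := fun n => (Set.Infinite.natEmbedding A hA n).2
  set E : ℕ → Set Ω :=
    fun n => {ω | (siteCluster d (fun v => σ v ω = true) (a n)).Infinite} with hEdef
  have hEmeas : ∀ n, MeasurableSet (E n) := by
    intro n
    have : E n = Φ ⁻¹' {c | ((siteCluster d (fun v => c v = true) (a n)) ∩ Set.univ).Infinite} := by
      ext ω; simp [hEdef, Set.inter_univ, hΦdef]
    rw [this]
    exact hΦ (PercAux.measurable_cluster_inter_infinite Set.univ (a n))
  set B : ℕ → Set Ω := fun N => ⋃ n, E (n + N) with hBdef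
  have hBmeas : ∀ N, MeasurableSet (B N) := fun N => MeasurableSet.iUnion fun n => hEmeas _
  have hBanti : Antitone B := by
    intro N M h ω hω
    obtain ⟨n, hn⟩ := Set.mem_iUnion.mp hω
    refine Set.mem_iUnion.mpr ⟨n + (M - N), ?_⟩
    have : n + (M - N) + N = n + M := by omega
    rw [this]; exact hn
  have hθB : ∀ N, θ ≤ P (B N) := by
    intro N
    have h1 : E N ⊆ B N := by
      intro ω hω
      exact Set.mem_iUnion.mpr ⟨0, by simpa using hω⟩
    calc θ = P (E N) := (hmarg (a N)).symm
      _ ≤ P (B N) := measure_mono h1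
  have hLtend := tendsto_measure_iInter_atTop (μ := P)
    (fun N => (hBmeas N).nullMeasurableSet) hBanti ⟨0, measure_ne_top P _⟩
  have hθL : θ ≤ P (⋂ N, B N) :=
    ge_of_tendsto hLtend (Filter.Eventually.of_forall hθB)
  set Uq : Set Ω := {ω | ∀ x y : Fin d → ℤ,
      (siteCluster d (fun v => σ v ω = true) x).Infinite →
      (siteCluster d (fun v => σ v ω = true) y).Infinite →
      siteCluster d (fun v => σ v ω = true) x = siteCluster d (fun v => σ v ω = true) y}
    with hUqdef
  have hUqc : P Uqᶜ = 0 := by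
    have h := ae_iff.mp huniq
    have : Uqᶜ = {ω | ¬ ∀ x y : Fin d → ℤ,
        (siteCluster d (fun v => σ v ω = true) x).Infinite →
        (siteCluster d (fun v => σ v ω = true) y).Infinite →
        siteCluster d (fun v => σ v ω = true) x = siteCluster d (fun v => σ v ω = true) y} := by
      rw [hUqdef, Set.compl_setOf]
    rw [this]; exact h
  have hLUqT : (⋂ N, B N) ∩ Uq ⊆ T := by
    rintro ω ⟨hL, hUq⟩
    set Mset : Set ℕ := {n | (siteCluster d (fun v => σ v ω = true) (a n)).Infinite} with hMdef
    have hMub : ∀ N, ∃ n ∈ Mset, N ≤ n := by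
      intro N
      obtain ⟨n, hn⟩ := Set.mem_iUnion.mp (Set.mem_iInter.mp hL N)
      exact ⟨n + N, hn, Nat.le_add_left _ _⟩
    have hMinf : Mset.Infinite := by
      intro hfin
      obtain ⟨b, hb⟩ := hfin.bddAbove
      obtain ⟨n, hn1, hn2⟩ := hMub (b + 1)
      exact absurd (hb hn1) (by omega)
    obtain ⟨n0, hn0⟩ := hMinf.nonempty
    have himg : (a '' Mset).Infinite := hMinf.image (Set.injOn_of_injective ha_inj)
    refine ⟨a n0, himg.mono ?_⟩
    rintro z ⟨n, hn, rfl⟩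
    obtain ⟨y, hy⟩ := hn.nonempty
    have h1 : a n ∈ siteCluster d (fun v => σ v ω = true) (a n) := PercAux.mem_self hy.1
    refine ⟨?_, haA n⟩
    rw [← hUq (a n) (a n0) hn hn0]
    exact h1
  have hTθ : θ ≤ P T := by
    have hsplit : (⋂ N, B N) ⊆ ((⋂ N, B N) ∩ Uq) ∪ Uqᶜ := by
      intro ω hω
      by_cases h : ω ∈ Uq
      · exact Or.inl ⟨hω, h⟩
      · exact Or.inr h
    calc θ ≤ P (⋂ N, B N) := hθL
      _ ≤ P (((⋂ N, B N) ∩ Uq) ∪ Uqᶜ) := measure_mono hsplit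
      _ ≤ P ((⋂ N, B N) ∩ Uq) + P Uqᶜ := measure_union_le _ _
      _ = P ((⋂ N, B N) ∩ Uq) := by rw [hUqc, add_zero]
      _ ≤ P T := measure_mono hLUqT
  have hT1 : P T = 1 := by
    refine h01.resolve_left (fun h0 => ?_)
    exact absurd (hTθ.trans h0.le) hθ.not_ge
  -- conclude
  set G : Set Ω := {ω | ∀ x : Fin d → ℤ,
      (siteCluster d (fun v => σ v ω = true) x).Infinite →
      ((siteCluster d (fun v => σ v ω = true) x) ∩ A).Infinite} with hGdef
  have hTUqG : T ∩ Uq ⊆ G := by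
    rintro ω ⟨hT', hUq⟩ x hx
    obtain ⟨x0, hx0⟩ := hT'
    have hx0inf : (siteCluster d (fun v => σ v ω = true) x0).Infinite :=
      hx0.mono Set.inter_subset_left
    rw [hUq x x0 hx hx0inf]
    exact hx0
  have hGceq : P Gᶜ = 0 := by
    have h1 : Gᶜ ⊆ Tᶜ ∪ Uqᶜ := by
      rw [← Set.compl_inter]
      exact Set.compl_subset_compl.mpr hTUqG
    refine le_antisymm ?_ zero_le
    calc P Gᶜ ≤ P (Tᶜ ∪ Uqᶜ) := measure_mono h1
      _ ≤ P Tᶜ + P Uqᶜ := measure_union_le _ _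
      _ = 0 := by rw [(prob_compl_eq_zero_iff hTmeas).mpr hT1, hUqc, add_zero]
  refine le_antisymm prob_le_one ?_
  calc (1 : ENNReal) = P Set.univ := measure_univ.symm
    _ ≤ P (G ∪ Gᶜ) := measure_mono (by rw [Set.union_compl_self])
    _ ≤ P G + P Gᶜ := measure_union_le _ _
    _ = P G := by rw [hGceq, add_zero]
end

section
/- For the simple symmetric random walk on ℤ², the walk is recurrent: almost surely it returns to the origin infinitely often. -/
open MeasureTheory ProbabilityTheory Filter

set_option linter.unusedSectionVars false
set_option maxHeartbeats 1000000

def g1 : ℕ → ℤ → ℕ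
  | 0, s => if s = 0 then 1 else 0
  | n+1, s => g1 n (s-1) + g1 n (s+1)

lemma g1_zero_of_lt : ∀ (n : ℕ) (s : ℤ), (n : ℤ) < s → g1 n s = 0 := by
  intro n
  induction n with
  | zero => intro s hs; simp [g1]; omega
  | succ n ih =>
    intro s hs
    simp only [g1]
    rw [ih (s-1) (by push_cast at hs ⊢; omega), ih (s+1) (by push_cast at hs ⊢; omega)]

lemma g1_zero_of_lt' : ∀ (n : ℕ) (s : ℤ), s < -(n : ℤ) → g1 n s = 0 := by
  intro n
  induction n with
  | zero => intro s hs; simp [g1]; omega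
  | succ n ih =>
    intro s hs
    simp only [g1]
    rw [ih (s-1) (by push_cast at hs ⊢; omega), ih (s+1) (by push_cast at hs ⊢; omega)]

lemma g1_eq_choose : ∀ (n : ℕ) (k : ℕ), g1 n (2 * (k : ℤ) - n) = n.choose k := by
  intro n
  induction n with
  | zero =>
    intro k
    cases k with
    | zero => simp [g1]
    | succ k =>
      rw [Nat.choose_eq_zero_of_lt (Nat.succ_pos k)]
      simp only [g1]
      rw [if_neg (by push_cast; omega)]
  | succ n ih =>
    intro k
    simp only [g1]
    cases k with
    | zero =>
      rw [show (2 * ((0:ℕ) : ℤ) - ((n+1 : ℕ) : ℤ) - 1 : ℤ) = -(n:ℤ) + (-2) by push_cast; ring]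
      rw [g1_zero_of_lt' n _ (by omega)]
      rw [show (2 * ((0:ℕ) : ℤ) - ((n+1 : ℕ) : ℤ) + 1 : ℤ) = 2 * ((0:ℕ):ℤ) - n by push_cast; ring]
      rw [ih 0]; simp
    | succ k =>
      rw [show (2 * ((k+1:ℕ) : ℤ) - ((n+1 : ℕ) : ℤ) - 1 : ℤ) = 2 * (k:ℤ) - n by push_cast; ring]
      rw [show (2 * ((k+1:ℕ) : ℤ) - ((n+1 : ℕ) : ℤ) + 1 : ℤ) = 2 * ((k+1:ℕ):ℤ) - n by push_cast; ring]
      rw [ih k, ih (k+1)]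
      exact (Nat.choose_succ_succ n k).symm

lemma g1_central (n : ℕ) : g1 (2 * n) 0 = Nat.centralBinom n := by
  have := g1_eq_choose (2 * n) n
  rw [show (2 * (n:ℤ) - (2*n : ℕ) : ℤ) = 0 by push_cast; ring] at this
  rw [this]; rfl

lemma centralBinom_sq_lb : ∀ n, 1 ≤ n → 16 ^ n ≤ 4 * n * (Nat.centralBinom n) ^ 2 := by
  intro n
  induction n with
  | zero => omega
  | succ n ih =>
    intro _
    rcases Nat.eq_zero_or_pos n with h | h
    · subst h; decide
    have IH := ih h
    have key : (n+1)^2 * (4 * (n+1) * (Nat.centralBinom (n+1))^2)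
        = 16 * ((n+1) * (2*n+1)^2 * (Nat.centralBinom n)^2) := by
      have h2 := Nat.succ_mul_centralBinom_succ n
      calc (n+1)^2 * (4 * (n+1) * (Nat.centralBinom (n+1))^2)
          = 4 * (n+1) * ((n+1) * Nat.centralBinom (n+1))^2 := by ring
        _ = 4 * (n+1) * (2 * (2*n+1) * Nat.centralBinom n)^2 := by rw [h2]
        _ = 16 * ((n+1) * (2*n+1)^2 * (Nat.centralBinom n)^2) := by ring
    have step : (n+1)^2 * 16^(n+1) ≤ (n+1)^2 * (4 * (n+1) * (Nat.centralBinom (n+1))^2) := by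
      rw [key]
      have h1 : (n+1)^2 * 16^(n+1) = 16 * ((n+1)^2 * 16^n) := by ring
      rw [h1]
      apply Nat.mul_le_mul_left
      calc (n+1)^2 * 16^n ≤ (n+1)^2 * (4 * n * (Nat.centralBinom n)^2) := Nat.mul_le_mul_left _ IH
        _ = ((n+1) * (4*n)) * ((n+1) * (Nat.centralBinom n)^2) := by ring
        _ ≤ (2*n+1)^2 * ((n+1) * (Nat.centralBinom n)^2) := by
            apply Nat.mul_le_mul_right; nlinarith
        _ = (n+1) * (2*n+1)^2 * (Nat.centralBinom n)^2 := by ring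
    exact Nat.le_of_mul_le_mul_left step (by positivity)

noncomputable def q2 (n : ℕ) (y : ℤ × ℤ) : ENNReal :=
  ((g1 n (y.1 + y.2) * g1 n (y.1 - y.2) : ℕ) : ENNReal) / 4 ^ n

lemma q2_zero : q2 0 0 = 1 := by simp [q2, g1]

lemma one_div_le_q2 (j : ℕ) (hj : 1 ≤ j) : ((4*j : ℕ) : ENNReal)⁻¹ ≤ q2 (2*j) 0 := by
  have hq : q2 (2*j) 0 = ((Nat.centralBinom j * Nat.centralBinom j : ℕ) : ENNReal) / (16:ENNReal)^j := by
    simp only [q2, Prod.fst_zero, Prod.snd_zero, add_zero, sub_zero, g1_central]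
    congr 1
    rw [show ((4:ENNReal)^(2*j)) = ((4:ENNReal)^2)^j by rw [← pow_mul], show ((4:ENNReal)^2) = 16 by norm_num]
  rw [hq, ENNReal.le_div_iff_mul_le (Or.inl (by positivity)) (Or.inl (ENNReal.pow_ne_top (by norm_num)))]
  have hnat : 16 ^ j ≤ (4*j) * (Nat.centralBinom j * Nat.centralBinom j) := by
    have := centralBinom_sq_lb j hj
    nlinarith [sq_nonneg (Nat.centralBinom j)]
  have hcast : ((16:ENNReal)^j) ≤ ((4*j : ℕ) : ENNReal) * ((Nat.centralBinom j * Nat.centralBinom j : ℕ) : ENNReal) := by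
    calc ((16:ENNReal)^j) = (((16^j : ℕ) : ENNReal)) := by push_cast; ring
      _ ≤ (((4*j) * (Nat.centralBinom j * Nat.centralBinom j) : ℕ) : ENNReal) := by
          exact_mod_cast Nat.cast_le.2 hnat
      _ = _ := by push_cast; ring
  have hne0 : ((4*j:ℕ):ENNReal) ≠ 0 := Nat.cast_ne_zero.2 (by omega)
  have hnetop : ((4*j:ℕ):ENNReal) ≠ ⊤ := ENNReal.natCast_ne_top _
  calc ((4*j:ℕ):ENNReal)⁻¹ * (16:ENNReal)^j
      ≤ ((4*j:ℕ):ENNReal)⁻¹ * (((4*j : ℕ):ENNReal) * ((Nat.centralBinom j * Nat.centralBinom j : ℕ):ENNReal)) :=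
        mul_le_mul_right hcast _
    _ = _ := by
        rw [← mul_assoc, ENNReal.inv_mul_cancel hne0 hnetop, one_mul]

lemma tsum_q2_eq_top : ∑' n, q2 n 0 = ⊤ := by
  have h1 : ∑' j, q2 (2*(j+1)) 0 ≤ ∑' n, q2 n 0 :=
    ENNReal.tsum_comp_le_tsum_of_injective (f := fun j : ℕ => 2*(j+1))
      (fun a b h => by simp only at h; omega) (fun n => q2 n 0)
  have h2 : ∑' j, ((4*(j+1) : ℕ) : ENNReal)⁻¹ ≤ ∑' j, q2 (2*(j+1)) 0 :=
    ENNReal.tsum_le_tsum fun j => one_div_le_q2 (j+1) (by omega)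
  have h3 : ∑' j, ((4*(j+1) : ℕ) : ENNReal)⁻¹ = ⊤ := by
    by_contra h
    have hsummable := ENNReal.summable_toReal h
    have heq : (fun j => (((4*(j+1) : ℕ) : ENNReal)⁻¹).toReal)
        = fun j : ℕ => ((4*(j+1) : ℕ) : ℝ)⁻¹ := by
      funext j
      rw [ENNReal.toReal_inv, ENNReal.toReal_natCast]
    rw [heq] at hsummable
    have h4 : Summable (fun j : ℕ => ((j+1 : ℕ) : ℝ)⁻¹) := by
      have := hsummable.mul_left 4
      refine this.congr fun j => ?_
      push_cast
      field_simp
    have h5 : Summable (fun n : ℕ => (n : ℝ)⁻¹) := by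
      rw [← summable_nat_add_iff 1]
      exact h4.congr fun j => by push_cast; ring_nf
    have := Real.not_summable_one_div_natCast
    simp only [one_div] at this
    exact this h5
  exact top_le_iff.1 (le_trans (h3 ▸ h2) h1)

lemma q2_step (n : ℕ) (y : ℤ × ℤ) :
    q2 n (y - (1,0)) * (1/4) + q2 n (y - (-1,0)) * (1/4) + q2 n (y - (0,1)) * (1/4)
      + q2 n (y - (0,-1)) * (1/4) = q2 (n+1) y := by
  obtain ⟨a, b⟩ := y
  simp only [q2, Prod.mk_sub_mk, Prod.fst, Prod.snd]
  rw [show (a - 1 + (b - 0)) = (a+b) - 1 by ring, show (a - 1 - (b - 0)) = (a-b) - 1 by ring,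
    show (a - -1 + (b - 0)) = (a+b) + 1 by ring, show (a - -1 - (b - 0)) = (a-b) + 1 by ring,
    show (a - 0 + (b - 1)) = (a+b) - 1 by ring, show (a - 0 - (b - 1)) = (a-b) + 1 by ring,
    show (a - 0 + (b - -1)) = (a+b) + 1 by ring, show (a - 0 - (b - -1)) = (a-b) - 1 by ring]
  show _ = ((g1 (n+1) (a+b) * g1 (n+1) (a-b) : ℕ) : ENNReal) / 4 ^ (n+1)
  simp only [g1]
  have h4 : ((4:ENNReal)^n)⁻¹ ≠ ⊤ := by
    simp [ENNReal.inv_ne_top]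
  simp only [div_eq_mul_inv, pow_succ, ENNReal.mul_inv (a := 4^n) (b := 4) (Or.inl (pow_ne_zero n (by norm_num))) (Or.inl (ENNReal.pow_ne_top (by norm_num)))]
  push_cast
  ring



section
variable {Ω : Type*} [MeasurableSpace Ω] (P : Measure Ω) [IsProbabilityMeasure P]
    (X : ℕ → Ω → ℤ × ℤ) (hmeas : ∀ i, Measurable (X i))
    (hindep : iIndepFun X P)
    (hE : ∀ i, P {ω | X i ω = (1, 0)} = 1/4)
    (hW : ∀ i, P {ω | X i ω = (-1, 0)} = 1/4)
    (hN : ∀ i, P {ω | X i ω = (0, 1)} = 1/4)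
    (hS : ∀ i, P {ω | X i ω = (0, -1)} = 1/4)

include hmeas hindep hE hW hN hS in
/-- the four-point support is a.s. -/
lemma step_as (i : ℕ) :
    P ({ω | X i ω = (1,0)} ∪ {ω | X i ω = (-1,0)} ∪ {ω | X i ω = (0,1)} ∪ {ω | X i ω = (0,-1)}) = 1 := by
  have m1 : MeasurableSet {ω | X i ω = ((1:ℤ),(0:ℤ))} := (hmeas i) (measurableSet_singleton _)
  have m2 : MeasurableSet {ω | X i ω = ((-1:ℤ),(0:ℤ))} := (hmeas i) (measurableSet_singleton _)
  have m3 : MeasurableSet {ω | X i ω = ((0:ℤ),(1:ℤ))} := (hmeas i) (measurableSet_singleton _)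
  have m4 : MeasurableSet {ω | X i ω = ((0:ℤ),(-1:ℤ))} := (hmeas i) (measurableSet_singleton _)
  rw [measure_union (by
        simp only [Set.disjoint_left, Set.mem_union, Set.mem_setOf_eq]
        rintro ω (h | h) h4 <;> simp_all) m4,
      measure_union (by
        simp only [Set.disjoint_left, Set.mem_union, Set.mem_setOf_eq]
        rintro ω (h | h) h3 <;> simp_all) m3,
      measure_union (by
        simp only [Set.disjoint_left, Set.mem_setOf_eq]
        rintro ω h h2; simp_all) m2]
  rw [hE i, hW i, hN i, hS i, ENNReal.div_add_div_same, ENNReal.div_add_div_same,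
    ENNReal.div_add_div_same]
  norm_num
  exact ENNReal.div_self (by norm_num) (by norm_num)


set_option linter.unusedSectionVars false

def blkf (X : ℕ → Ω → ℤ × ℤ) (m n : ℕ) : Ω → ℤ × ℤ := ∑ i ∈ Finset.Ico m (m+n), X i

lemma blkf_apply (m n : ℕ) (ω : Ω) : blkf X m n ω = ∑ i ∈ Finset.Ico m (m+n), X i ω := by
  simp [blkf, Finset.sum_apply]

include hmeas in
lemma blkf_meas (m n : ℕ) : Measurable (blkf X m n) := by
  have : blkf X m n = fun ω => ∑ i ∈ Finset.Ico m (m+n), X i ω :=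
    funext fun ω => blkf_apply X m n ω
  rw [this]
  exact Finset.measurable_sum _ (fun i _ => hmeas i)

lemma blkf_succ (m n : ℕ) : blkf X m (n+1) = blkf X m n + X (m+n) := by
  unfold blkf
  rw [← Finset.sum_Ico_succ_top (Nat.le_add_right m n)]
  rfl

include hmeas hindep hE hW hN hS in
lemma blk_dist : ∀ n m y, P {ω | blkf X m n ω = y} = q2 n y := by
  intro n
  induction n with
  | zero =>
    intro m y
    have hb : blkf X m 0 = fun _ => (0 : ℤ × ℤ) := by
      unfold blkf; simp; rfl
    rw [hb]
    rcases eq_or_ne y 0 with rfl | hy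
    · have : {ω : Ω | (0 : ℤ × ℤ) = 0} = Set.univ := by simp
      rw [this, measure_univ, q2]
      simp [g1]
    · have : {ω : Ω | (0 : ℤ × ℤ) = y} = ∅ := by
        ext ω; simp [eq_comm, hy]
      rw [this, measure_empty, q2]
      obtain ⟨a, b⟩ := y
      have : a + b ≠ 0 ∨ a - b ≠ 0 := by
        by_contra h
        push_neg at h
        apply hy
        have : a = 0 ∧ b = 0 := by omega
        simp [this.1, this.2, Prod.ext_iff]
      rcases this with h | h
      · simp only [g1]
        rw [if_neg h]
        simp
      · simp only [g1]
        rw [if_neg h]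
        simp
  | succ n ih =>
    intro m y
    -- independence of blkf X m n and X (m+n)
    have hnotmem : m + n ∉ Finset.Ico m (m+n) := by simp
    have hind : IndepFun (blkf X m n) (X (m+n)) P :=
      hindep.indepFun_finset_sum_of_notMem hmeas hnotmem
    have hkey : ∀ e : ℤ × ℤ, P ({ω | blkf X m n ω = y - e} ∩ {ω | X (m+n) ω = e})
        = q2 n (y - e) * P {ω | X (m+n) ω = e} := by
      intro e
      have := hind.measure_inter_preimage_eq_mul {y - e} {e}
        (measurableSet_singleton _) (measurableSet_singleton _)
      simpa [Set.preimage, ih m (y-e)] using this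
    set E1 : Set Ω := {ω | X (m+n) ω = ((1:ℤ),(0:ℤ))} with hE1
    set E2 : Set Ω := {ω | X (m+n) ω = ((-1:ℤ),(0:ℤ))} with hE2
    set E3 : Set Ω := {ω | X (m+n) ω = ((0:ℤ),(1:ℤ))} with hE3
    set E4 : Set Ω := {ω | X (m+n) ω = ((0:ℤ),(-1:ℤ))} with hE4
    have m1 : MeasurableSet E1 := (hmeas (m+n)) (measurableSet_singleton _)
    have m2 : MeasurableSet E2 := (hmeas (m+n)) (measurableSet_singleton _)
    have m3 : MeasurableSet E3 := (hmeas (m+n)) (measurableSet_singleton _)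
    have m4 : MeasurableSet E4 := (hmeas (m+n)) (measurableSet_singleton _)
    set A : Set Ω := {ω | blkf X m (n+1) ω = y} with hA
    have mA : MeasurableSet A := (blkf_meas X hmeas m (n+1)) (measurableSet_singleton y)
    set U : Set Ω := E1 ∪ E2 ∪ E3 ∪ E4 with hU
    have mU : MeasurableSet U := ((m1.union m2).union m3).union m4
    have hU1 : P U = 1 := step_as P X hmeas hindep hE hW hN hS (m+n)
    have hPAU : P A = P (A ∩ U) := by
      have h1 := measure_inter_add_diff (μ := P) A mU
      have h2 : P (A \ U) = 0 := by
        apply measure_mono_null (Set.diff_subset_compl A U)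
        exact (prob_compl_eq_zero_iff mU).2 hU1
      rw [← h1, h2, add_zero]
    have hsplit : A ∩ U = (A ∩ E1) ∪ (A ∩ E2) ∪ (A ∩ E3) ∪ (A ∩ E4) := by
      rw [hU]
      rw [Set.inter_union_distrib_left, Set.inter_union_distrib_left,
        Set.inter_union_distrib_left]
    have hAe : ∀ e : ℤ × ℤ, A ∩ {ω | X (m+n) ω = e}
        = {ω | blkf X m n ω = y - e} ∩ {ω | X (m+n) ω = e} := by
      intro e
      ext ω
      have hss : blkf X m (n+1) ω = blkf X m n ω + X (m+n) ω := by
        rw [blkf_succ]; rfl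
      simp only [hA, Set.mem_inter_iff, Set.mem_setOf_eq, hss]
      constructor
      · rintro ⟨h1, h2⟩; exact ⟨by rw [← h1, h2]; ring, h2⟩
      · rintro ⟨h1, h2⟩; exact ⟨by rw [h1, h2]; ring, h2⟩
    have hdisj12 : Disjoint (A ∩ E1) (A ∩ E2) := by
      apply Set.disjoint_left.2
      rintro ω ⟨-, h1⟩ ⟨-, h2⟩
      simp only [hE1, Set.mem_setOf_eq] at h1
      simp only [hE2, Set.mem_setOf_eq] at h2
      rw [h1] at h2; simp at h2
    have hdisj3 : Disjoint ((A ∩ E1) ∪ (A ∩ E2)) (A ∩ E3) := by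
      apply Set.disjoint_left.2
      rintro ω (⟨-, h1⟩ | ⟨-, h1⟩) ⟨-, h2⟩ <;>
        · simp only [hE1, hE2, Set.mem_setOf_eq] at h1
          simp only [hE3, Set.mem_setOf_eq] at h2
          rw [h1] at h2; simp at h2
    have hdisj4 : Disjoint ((A ∩ E1) ∪ (A ∩ E2) ∪ (A ∩ E3)) (A ∩ E4) := by
      apply Set.disjoint_left.2
      rintro ω ((⟨-, h1⟩ | ⟨-, h1⟩) | ⟨-, h1⟩) ⟨-, h2⟩ <;>
        · simp only [hE1, hE2, hE3, Set.mem_setOf_eq] at h1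
          simp only [hE4, Set.mem_setOf_eq] at h2
          rw [h1] at h2; simp at h2
    have hsum : P A = P (A ∩ E1) + P (A ∩ E2) + P (A ∩ E3) + P (A ∩ E4) := by
      rw [hPAU, hsplit, measure_union hdisj4 (mA.inter m4),
        measure_union hdisj3 (mA.inter m3), measure_union hdisj12 (mA.inter m2)]
    rw [hsum, hAe (1,0), hAe (-1,0), hAe (0,1), hAe (0,-1)] at *
    rw [hkey (1,0), hkey (-1,0), hkey (0,1), hkey (0,-1), hE (m+n), hW (m+n), hN (m+n), hS (m+n)]
    exact q2_step n y


def FRset (X : ℕ → Ω → ℤ × ℤ) (m k : ℕ) : Set Ω :=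
  {ω | blkf X m k ω = 0 ∧ ∀ j, 0 < j → j < k → blkf X m j ω ≠ 0}

lemma blkf_split (m k n : ℕ) (hk : k ≤ n) (ω : Ω) :
    blkf X m n ω = blkf X m k ω + blkf X (m+k) (n-k) ω := by
  rw [blkf_apply, blkf_apply, blkf_apply]
  rw [show m + k + (n - k) = m + n by omega]
  exact (Finset.sum_Ico_consecutive _ (Nat.le_add_right m k)
    (by omega)).symm

lemma ren_decomp (m n : ℕ) (hn : 1 ≤ n) :
    {ω | blkf X m n ω = 0}
      = ⋃ k ∈ Finset.Icc 1 n, (FRset X m k ∩ {ω | blkf X (m+k) (n-k) ω = 0}) := by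
  ext ω
  simp only [Set.mem_setOf_eq, Set.mem_iUnion, Set.mem_inter_iff, Finset.mem_Icc]
  constructor
  · intro h0
    have hex : ∃ j, 0 < j ∧ j ≤ n ∧ blkf X m j ω = 0 := ⟨n, hn, le_rfl, h0⟩
    classical
    set k := Nat.find hex with hkdef
    obtain ⟨hk1, hk2, hk3⟩ := Nat.find_spec hex
    refine ⟨k, ⟨hk1, hk2⟩, ⟨hk3, ?_⟩, ?_⟩
    · intro j hj1 hj2 hj0
      exact Nat.find_min hex hj2 ⟨hj1, by omega, hj0⟩
    · have := blkf_split X m k n hk2 ω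
      rw [h0, hk3, zero_add] at this
      exact this.symm
  · rintro ⟨k, ⟨hk1, hk2⟩, ⟨hFR, -⟩, hblk⟩
    rw [blkf_split X m k n hk2 ω, hFR, hblk, add_zero]


include hmeas hindep in
lemma FR_indep (m k n' : ℕ) :
    P (FRset X m k ∩ {ω | blkf X (m+k) n' ω = 0})
      = P (FRset X m k) * P {ω | blkf X (m+k) n' ω = 0} := by
  classical
  set MF : MeasurableSpace Ω :=
    ⨆ i ∈ Set.Ico m (m+k), MeasurableSpace.comap (X i) inferInstance with hMF
  set MG : MeasurableSpace Ω :=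
    ⨆ i ∈ Set.Ico (m+k) (m+k+n'), MeasurableSpace.comap (X i) inferInstance with hMG
  have hIndep : Indep MF MG P := by
    apply indep_iSup_of_disjoint (fun i => (hmeas i).comap_le) hindep
    rw [Set.disjoint_left]
    intro i h1 h2
    simp only [Set.mem_Ico] at h1 h2
    omega
  have hmeasF : ∀ j ≤ k, Measurable[MF] (blkf X m j) := by
    intro j hj
    have he : blkf X m j = fun ω => ∑ i ∈ Finset.Ico m (m+j), X i ω :=
      funext fun ω => blkf_apply X m j ω
    rw [he]
    apply Finset.measurable_sum
    intro i hi
    have hle : MeasurableSpace.comap (X i) inferInstance ≤ MF := by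
      rw [hMF]
      refine le_biSup (f := fun i => MeasurableSpace.comap (X i) inferInstance) ?_
      simp only [Finset.mem_Ico] at hi
      simp only [Set.mem_Ico]
      omega
    exact fun s hs => hle _ ⟨s, hs, rfl⟩
  have hmeasG : Measurable[MG] (blkf X (m+k) n') := by
    have he : blkf X (m+k) n' = fun ω => ∑ i ∈ Finset.Ico (m+k) (m+k+n'), X i ω :=
      funext fun ω => blkf_apply X (m+k) n' ω
    rw [he]
    apply Finset.measurable_sum
    intro i hi
    have hle : MeasurableSpace.comap (X i) inferInstance ≤ MG := by
      rw [hMG]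
      refine le_biSup (f := fun i => MeasurableSpace.comap (X i) inferInstance) ?_
      simp only [Finset.mem_Ico] at hi
      simp only [Set.mem_Ico]
      omega
    exact fun s hs => hle _ ⟨s, hs, rfl⟩
  have hFRmeas : MeasurableSet[MF] (FRset X m k) := by
    have hset : FRset X m k = (blkf X m k) ⁻¹' {0}
        ∩ ⋂ j ∈ Finset.Ico 1 k, ((blkf X m j) ⁻¹' {0})ᶜ := by
      ext ω
      simp only [FRset, Set.mem_setOf_eq, Set.mem_inter_iff, Set.mem_preimage,
        Set.mem_singleton_iff, Set.mem_iInter, Set.mem_compl_iff, Finset.mem_Ico]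
      constructor
      · rintro ⟨h1, h2⟩
        exact ⟨h1, fun j hj => h2 j hj.1 hj.2⟩
      · rintro ⟨h1, h2⟩
        exact ⟨h1, fun j hj1 hj2 => h2 j ⟨hj1, hj2⟩⟩
    rw [hset]
    refine MeasurableSet.inter (hmeasF k le_rfl (measurableSet_singleton 0)) ?_
    refine Finset.measurableSet_biInter _ ?_
    intro j hj
    simp only [Finset.mem_Ico] at hj
    exact (hmeasF j (by omega) (measurableSet_singleton 0)).compl
  have hGset : MeasurableSet[MG] {ω | blkf X (m+k) n' ω = 0} := by
    have : {ω | blkf X (m+k) n' ω = 0} = (blkf X (m+k) n') ⁻¹' {0} := by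
      ext ω; simp
    rw [this]
    exact hmeasG (measurableSet_singleton 0)
  exact (Indep_iff MF MG P).1 hIndep _ _ hFRmeas hGset


include hmeas in
lemma FRset_meas (m k : ℕ) : MeasurableSet (FRset X m k) := by
  classical
  have hset : FRset X m k = (blkf X m k) ⁻¹' {0}
      ∩ ⋂ j ∈ Finset.Ico 1 k, ((blkf X m j) ⁻¹' {0})ᶜ := by
    ext ω
    simp only [FRset, Set.mem_setOf_eq, Set.mem_inter_iff, Set.mem_preimage,
      Set.mem_singleton_iff, Set.mem_iInter, Set.mem_compl_iff, Finset.mem_Ico]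
    constructor
    · rintro ⟨h1, h2⟩
      exact ⟨h1, fun j hj => h2 j hj.1 hj.2⟩
    · rintro ⟨h1, h2⟩
      exact ⟨h1, fun j hj1 hj2 => h2 j ⟨hj1, hj2⟩⟩
  rw [hset]
  refine MeasurableSet.inter (blkf_meas X hmeas m k (measurableSet_singleton 0)) ?_
  exact Finset.measurableSet_biInter _ fun j hj =>
    (blkf_meas X hmeas m j (measurableSet_singleton 0)).compl

lemma FRset_disjoint (m : ℕ) {k k' : ℕ} (hk : 0 < k) (hk' : 0 < k') (hne : k ≠ k') :
    Disjoint (FRset X m k) (FRset X m k') := by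
  rw [Set.disjoint_left]
  rintro ω ⟨h1, h2⟩ ⟨h1', h2'⟩
  rcases Nat.lt_or_ge k k' with h | h
  · exact h2' k hk h h1
  · exact h2 k' hk' (by omega) h1'

include hmeas hindep hE hW hN hS in
lemma ren_measure (m n : ℕ) (hn : 1 ≤ n) :
    q2 n 0 = ∑ k ∈ Finset.Icc 1 n, P (FRset X m k) * q2 (n-k) 0 := by
  classical
  have h0 : P {ω | blkf X m n ω = 0} = q2 n 0 :=
    blk_dist P X hmeas hindep hE hW hN hS n m 0
  rw [← h0, ren_decomp X m n hn]
  rw [measure_biUnion_finset ?hd ?hm]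
  · refine Finset.sum_congr rfl fun k hk => ?_
    simp only [Finset.mem_Icc] at hk
    rw [FR_indep P X hmeas hindep m k (n-k),
      blk_dist P X hmeas hindep hE hW hN hS (n-k) (m+k) 0]
  case hd =>
    intro k hk k' hk' hne
    simp only [Finset.mem_coe, Finset.mem_Icc] at hk hk'
    exact Disjoint.mono Set.inter_subset_left Set.inter_subset_left
      (FRset_disjoint X m (by omega) (by omega) hne)
  case hm =>
    intro k hk
    exact (FRset_meas X hmeas m k).inter
      (blkf_meas X hmeas (m+k) (n-k) (measurableSet_singleton 0))


include hmeas hindep hE hW hN hS in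
lemma return_prob_one (m : ℕ) : P {ω | ∃ j, 0 < j ∧ blkf X m j ω = 0} = 1 := by
  classical
  set Rm : Set Ω := {ω | ∃ j, 0 < j ∧ blkf X m j ω = 0} with hRm
  set c := P Rm with hc
  have hc1 : c ≤ 1 := prob_le_one
  rcases eq_or_lt_of_le hc1 with h | hlt
  · exact h
  exfalso
  -- partial sums of first-return probabilities are ≤ c
  have hFc : ∀ N, ∑ k ∈ Finset.Ico 1 (N+1), P (FRset X m k) ≤ c := by
    intro N
    rw [← measure_biUnion_finset (fun k hk k' hk' hne => by
        simp only [Finset.coe_Ico, Set.mem_Ico] at hk hk'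
        exact FRset_disjoint X m (by omega) (by omega) hne)
      (fun k _ => FRset_meas X hmeas m k)]
    apply measure_mono
    intro ω hω
    simp only [Set.mem_iUnion] at hω
    obtain ⟨k, hk, hFR⟩ := hω
    simp only [Finset.mem_Ico] at hk
    exact ⟨k, by omega, hFR.1⟩
  -- partial sums of q2
  set v : ℕ → ENNReal := fun N => ∑ n ∈ Finset.range (N+1), q2 n 0 with hvdef
  have hq2le : ∀ n, q2 n 0 ≤ 1 := by
    intro n
    rw [← blk_dist P X hmeas hindep hE hW hN hS n 0 0]
    exact prob_le_one
  have hvne : ∀ N, v N ≠ ⊤ := by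
    intro N
    rw [hvdef]
    exact (ENNReal.sum_lt_top.2 fun n _ => lt_of_le_of_lt (hq2le n) ENNReal.one_lt_top).ne
  have hv : ∀ N, v N ≤ 1 + c * v N := by
    intro N
    have e1 : v N = 1 + ∑ n ∈ Finset.Ico 1 (N+1), q2 n 0 := by
      simp only [hvdef]
      rw [Finset.range_eq_Ico, Finset.sum_eq_sum_Ico_succ_bot (show 0 < N+1 by omega), q2_zero]
    have e2 : ∑ n ∈ Finset.Ico 1 (N+1), q2 n 0
        = ∑ k ∈ Finset.Ico 1 (N+1), ∑ n ∈ Finset.Ico k (N+1), P (FRset X m k) * q2 (n-k) 0 := by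
      rw [Finset.sum_Ico_Ico_comm]
      refine Finset.sum_congr rfl fun n hn => ?_
      simp only [Finset.mem_Ico] at hn
      rw [ren_measure P X hmeas hindep hE hW hN hS m n hn.1, ← Finset.Ico_add_one_right_eq_Icc]
    have e3 : ∀ k ∈ Finset.Ico 1 (N+1),
        ∑ n ∈ Finset.Ico k (N+1), P (FRset X m k) * q2 (n-k) 0 ≤ P (FRset X m k) * v N := by
      intro k hk
      rw [← Finset.mul_sum]
      refine mul_le_mul_right ?_ _
      rw [Finset.sum_Ico_eq_sum_range]
      calc ∑ i ∈ Finset.range (N+1-k), q2 (k + i - k) 0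
          = ∑ i ∈ Finset.range (N+1-k), q2 i 0 := by
            refine Finset.sum_congr rfl fun i _ => ?_
            congr 1
            omega
        _ ≤ v N := by
            simp only [hvdef]
            exact Finset.sum_le_sum_of_subset (Finset.range_subset_range.2 (by omega))
    calc v N = 1 + ∑ n ∈ Finset.Ico 1 (N+1), q2 n 0 := e1
      _ = 1 + ∑ k ∈ Finset.Ico 1 (N+1), ∑ n ∈ Finset.Ico k (N+1), P (FRset X m k) * q2 (n-k) 0 := by
          rw [e2]
      _ ≤ 1 + ∑ k ∈ Finset.Ico 1 (N+1), P (FRset X m k) * v N :=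
          add_le_add_right (Finset.sum_le_sum e3) 1
      _ = 1 + (∑ k ∈ Finset.Ico 1 (N+1), P (FRset X m k)) * v N := by
          rw [Finset.sum_mul]
      _ ≤ 1 + c * v N := add_le_add_right (mul_le_mul_left (hFc N) _) 1
  have hbound : ∀ N, v N ≤ (1 - c)⁻¹ := by
    intro N
    have h1 : v N - c * v N ≤ 1 := tsub_le_iff_right.2 (hv N)
    have h2 : (1 - c) * v N = v N - c * v N := by
      rw [ENNReal.sub_mul (fun _ _ => hvne N), one_mul]
    rw [ENNReal.le_inv_iff_mul_le, mul_comm, h2]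
    exact h1
  have htsum : ∑' n, q2 n 0 ≤ (1 - c)⁻¹ := by
    rw [ENNReal.tsum_eq_iSup_sum]
    refine iSup_le fun s => ?_
    rcases s.eq_empty_or_nonempty with rfl | hs
    · simp
    have hsub : s ⊆ Finset.range (s.max' hs + 1) := fun x hx =>
      Finset.mem_range.2 (Nat.lt_succ_of_le (Finset.le_max' s x hx))
    calc ∑ n ∈ s, q2 n 0 ≤ ∑ n ∈ Finset.range (s.max' hs + 1), q2 n 0 :=
          Finset.sum_le_sum_of_subset hsub
      _ = v (s.max' hs) := rfl
      _ ≤ (1 - c)⁻¹ := hbound _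
  rw [tsum_q2_eq_top] at htsum
  have : (1 - c)⁻¹ ≠ ⊤ := by
    rw [ENNReal.inv_ne_top]
    intro hz
    rw [tsub_eq_zero_iff_le] at hz
    exact absurd hz (not_le.2 hlt)
  exact this (top_le_iff.1 htsum)

end


/-- The simple symmetric random walk on ℤ² (steps uniform on the 4 nearest
neighbours) is recurrent: almost surely it returns to the origin infinitely often. -/
theorem srw_Z2_recurrent
    {Ω : Type*} [MeasurableSpace Ω] (P : Measure Ω) [IsProbabilityMeasure P]
    (X : ℕ → Ω → ℤ × ℤ) (hmeas : ∀ i, Measurable (X i))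
    (hindep : iIndepFun X P)
    (hE : ∀ i, P {ω | X i ω = (1, 0)} = 1/4)
    (hW : ∀ i, P {ω | X i ω = (-1, 0)} = 1/4)
    (hN : ∀ i, P {ω | X i ω = (0, 1)} = 1/4)
    (hS : ∀ i, P {ω | X i ω = (0, -1)} = 1/4)
    (S : ℕ → Ω → ℤ × ℤ) (hSdef : ∀ n ω, S n ω = ∑ i ∈ Finset.range n, X i ω) :
    P {ω | {n : ℕ | 0 < n ∧ S n ω = 0}.Infinite} = 1 := by
  classical
  have hSblk : ∀ n ω, S n ω = blkf X 0 n ω := by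
    intro n ω
    rw [hSdef n ω, blkf_apply]
    congr 1
    rw [Finset.range_eq_Ico]
    congr 1
    omega
  set A : ℕ → Set Ω := fun m => {ω | ∃ j, 0 < j ∧ blkf X m j ω = 0} with hA
  have hAmeas : ∀ m, MeasurableSet (A m) := by
    intro m
    have : A m = ⋃ j, ⋃ (_ : 0 < j), (blkf X m j) ⁻¹' {0} := by
      ext ω
      simp [hA]
    rw [this]
    exact MeasurableSet.iUnion fun j => MeasurableSet.iUnion fun _ =>
      blkf_meas X hmeas m j (measurableSet_singleton 0)
  have hA1 : ∀ m, P (A m) = 1 := fun m => return_prob_one P X hmeas hindep hE hW hN hS m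
  set Good : Set Ω := ⋂ m, A m with hGooddef
  have hGood : P Good = 1 := by
    have hc : P Goodᶜ = 0 := by
      rw [hGooddef, Set.compl_iInter]
      refine le_antisymm (le_trans (measure_iUnion_le _) ?_) zero_le
      have : ∀ m, P (A m)ᶜ = 0 := fun m => (prob_compl_eq_zero_iff (hAmeas m)).2 (hA1 m)
      simp [this]
    exact (prob_compl_eq_zero_iff (μ := P) (MeasurableSet.iInter fun m => hAmeas m)).1 hc
  have hsub : Good ⊆ {ω | {n : ℕ | 0 < n ∧ S n ω = 0}.Infinite} := by
    intro ω hω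
    simp only [hGooddef, Set.mem_iInter, hA, Set.mem_setOf_eq] at hω
    have aux : ∀ N, (N = 0 ∨ (0 < N ∧ S N ω = 0)) → ∃ n, N < n ∧ 0 < n ∧ S n ω = 0 := by
      intro N hN0
      obtain ⟨j, hj, hblk⟩ := hω N
      refine ⟨N + j, by omega, by omega, ?_⟩
      have hsplit := blkf_split X 0 N (N + j) (by omega) ω
      rw [show 0 + N = N by omega, show N + j - N = j by omega] at hsplit
      rw [hSblk, hsplit, hblk, add_zero]
      rcases hN0 with rfl | ⟨-, hSN⟩
      · rw [blkf_apply]; simp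
      · rw [← hSblk]; exact hSN
    have claim : ∀ N, ∃ n, N < n ∧ 0 < n ∧ S n ω = 0 := by
      intro N
      induction N with
      | zero => exact aux 0 (Or.inl rfl)
      | succ N ih =>
        obtain ⟨n, hn1, hn2, hn3⟩ := ih
        rcases Nat.lt_or_ge (N+1) n with h | h
        · exact ⟨n, h, hn2, hn3⟩
        · have : n = N + 1 := by omega
          subst this
          exact aux (N+1) (Or.inr ⟨hn2, hn3⟩)
    simp only [Set.mem_setOf_eq]
    apply Set.infinite_of_not_bddAbove
    rintro ⟨b, hb⟩
    obtain ⟨n, hn1, hn2, hn3⟩ := claim b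
    exact absurd (hb ⟨hn2, hn3⟩) (by omega)
  refine le_antisymm prob_le_one ?_
  calc (1 : ENNReal) = P Good := hGood.symm
    _ ≤ _ := measure_mono hsub
end

section
/- For the simple symmetric random walk on ℤ started at 0, the rescaled exit time T_N/N² from (-N,N) converges in distribution as N → ∞ to the exit time of standard Brownian motion from (-1,1); in particular, the Laplace transform E[exp(-λ T_N/N²)] converges to 1/cosh(√(2λ)) for every λ > 0. -/
open MeasureTheory ProbabilityTheory Filter


lemma exp_sub_one_le_mul (x : ℝ) : Real.exp x - 1 ≤ x * Real.exp x := by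
  have h1 : (1 - x) * Real.exp x ≤ Real.exp (-x) * Real.exp x := by
    apply mul_le_mul_of_nonneg_right _ (Real.exp_pos x).le
    have := Real.add_one_le_exp (-x)
    linarith
  rw [← Real.exp_add, neg_add_cancel, Real.exp_zero] at h1
  nlinarith

lemma sinh_le_mul_exp (x : ℝ) : Real.sinh x ≤ x * Real.exp x := by
  have h := exp_sub_one_le_mul (2*x)
  have h2 : Real.exp (-x) * (Real.exp (2*x) - 1) ≤ Real.exp (-x) * (2*x * Real.exp (2*x)) :=
    mul_le_mul_of_nonneg_left h (Real.exp_pos _).le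
  have e1 : Real.exp (-x) * Real.exp (2*x) = Real.exp x := by
    rw [← Real.exp_add]; ring_nf
  rw [Real.sinh_eq]
  nlinarith [Real.exp_pos (-x), Real.exp_pos x]

lemma cosh_eq_two_sinh_sq (t : ℝ) : Real.cosh t = 2 * Real.sinh (t/2)^2 + 1 := by
  have h1 : Real.cosh (2 * (t/2)) = Real.cosh (t/2) ^ 2 + Real.sinh (t/2) ^ 2 :=
    Real.cosh_two_mul (t/2)
  have h2 : Real.cosh (t/2) ^ 2 = Real.sinh (t/2) ^ 2 + 1 := Real.cosh_sq (t/2)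
  have ht2 : 2 * (t/2) = t := by ring
  rw [ht2] at h1
  linarith

lemma half_sq_le_cosh_sub_one (t : ℝ) (ht : 0 ≤ t) : t^2/2 ≤ Real.cosh t - 1 := by
  have h := cosh_eq_two_sinh_sq t
  have hs : t/2 ≤ Real.sinh (t/2) := Real.self_le_sinh_iff.2 (by linarith)
  nlinarith

lemma cosh_sub_one_le (t : ℝ) (ht : 0 ≤ t) : Real.cosh t - 1 ≤ t^2/2 * Real.exp t := by
  have h := cosh_eq_two_sinh_sq t
  have hs : Real.sinh (t/2) ≤ (t/2) * Real.exp (t/2) := sinh_le_mul_exp (t/2)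
  have hs0 : 0 ≤ Real.sinh (t/2) := by
    rw [← Real.sinh_zero]; exact Real.sinh_le_sinh.2 (by linarith)
  have hsq : Real.sinh (t/2)^2 ≤ ((t/2) * Real.exp (t/2))^2 := pow_le_pow_left₀ hs0 hs 2
  have he : Real.exp (t/2) * Real.exp (t/2) = Real.exp t := by
    rw [← Real.exp_add]; ring_nf
  nlinarith [Real.exp_pos (t/2)]

lemma cosh_log_eq (c : ℝ) (hc : 1 ≤ c) : Real.cosh (Real.log (c + Real.sqrt (c^2 - 1))) = c := by
  set s := Real.sqrt (c^2 - 1) with hs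
  have hs0 : 0 ≤ s := Real.sqrt_nonneg _
  have hssq : s^2 = c^2 - 1 := Real.sq_sqrt (by nlinarith)
  have hy : (0:ℝ) < c + s := by nlinarith
  have hinv : (c + s)⁻¹ = c - s :=
    (eq_inv_of_mul_eq_one_left (by nlinarith)).symm
  rw [Real.cosh_eq, Real.exp_log hy, Real.exp_neg, Real.exp_log hy, hinv]
  ring

/-- The key analysis limit: N * arccosh(exp(lam/N^2)) → sqrt(2*lam). -/
lemma tendsto_n_arcosh (lam : ℝ) (hlam : 0 < lam) :
    Tendsto (fun N : ℕ => (N:ℝ) *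
      Real.log (Real.exp (lam/(N:ℝ)^2) + Real.sqrt ((Real.exp (lam/(N:ℝ)^2))^2 - 1)))
      atTop (nhds (Real.sqrt (2*lam))) := by
  set c : ℕ → ℝ := fun N => Real.exp (lam/(N:ℝ)^2) with hc
  set a : ℕ → ℝ := fun N => Real.log (c N + Real.sqrt ((c N)^2 - 1)) with ha
  have hc1 : ∀ N : ℕ, 1 ≤ c N := fun N =>
    Real.one_le_exp (div_nonneg hlam.le (sq_nonneg _))
  have hca : ∀ N, Real.cosh (a N) = c N := fun N => cosh_log_eq (c N) (hc1 N)
  have ha0 : ∀ N, 0 ≤ a N := fun N =>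
    Real.log_nonneg (by nlinarith [Real.sqrt_nonneg ((c N)^2 - 1), hc1 N])
  -- bounds on a N via cosh
  have hup : ∀ N, (a N)^2 ≤ 2 * (c N - 1) := by
    intro N
    have := half_sq_le_cosh_sub_one (a N) (ha0 N)
    rw [hca N] at this; linarith
  have hdown : ∀ N, 2 * (c N - 1) ≤ (a N)^2 * Real.exp (a N) := by
    intro N
    have := cosh_sub_one_le (a N) (ha0 N)
    rw [hca N] at this; nlinarith
  -- c N - 1 bounds
  have hcl : ∀ N : ℕ, lam/(N:ℝ)^2 ≤ c N - 1 := by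
    intro N; have := Real.add_one_le_exp (lam/(N:ℝ)^2); simp only [hc]; linarith
  have hcu : ∀ N : ℕ, c N - 1 ≤ lam/(N:ℝ)^2 * c N := by
    intro N; have := exp_sub_one_le_mul (lam/(N:ℝ)^2); simp only [hc]; linarith
  -- lam / N^2 → 0 so c N → 1

  have hN2 : Tendsto (fun N : ℕ => lam/(N:ℝ)^2) atTop (nhds 0) := by
    apply Tendsto.div_atTop tendsto_const_nhds
    exact (tendsto_pow_atTop two_ne_zero).comp tendsto_natCast_atTop_atTop
  have hcN : Tendsto c atTop (nhds 1) := by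
    have := (Real.continuous_exp.tendsto 0).comp hN2
    simpa [hc, Real.exp_zero, Function.comp_def] using this
  have haa : Tendsto a atTop (nhds 0) := by
    apply squeeze_zero ha0 (g := fun N => Real.sqrt (2*(c N - 1)))
    · intro N
      have h1 : (a N)^2 ≤ 2*(c N - 1) := hup N
      calc a N = Real.sqrt ((a N)^2) := (Real.sqrt_sq (ha0 N)).symm
        _ ≤ Real.sqrt (2*(c N -1)) := Real.sqrt_le_sqrt h1
    · have : Tendsto (fun N => 2*(c N - 1)) atTop (nhds 0) := by
        have := (hcN.sub_const 1).const_mul 2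
        simpa using this
      have h2 := (Real.continuous_sqrt.tendsto 0).comp this
      rw [Real.sqrt_zero] at h2
      exact h2
  set u : ℕ → ℝ := fun N => ((N:ℝ) * a N)^2 with hu
  have hL : Tendsto (fun N => 2*lam*Real.exp (-(a N))) atTop (nhds (2*lam)) := by
    have h1 : Tendsto (fun N => Real.exp (-(a N))) atTop (nhds 1) := by
      have hneg : Tendsto (fun N => -(a N)) atTop (nhds 0) := by simpa using haa.neg
      have := (Real.continuous_exp.tendsto 0).comp hneg
      simpa [Real.exp_zero, Function.comp_def] using this
    have := h1.const_mul (2*lam)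
    simpa using this
  have hU : Tendsto (fun N => 2*lam* c N) atTop (nhds (2*lam)) := by
    have := hcN.const_mul (2*lam)
    simpa using this
  have htu : Tendsto u atTop (nhds (2*lam)) := by
    apply tendsto_of_tendsto_of_tendsto_of_le_of_le' hL hU
    · filter_upwards [eventually_ge_atTop 1] with N hN
      have hN0 : (0:ℝ) < (N:ℝ)^2 := by positivity
      have h1 : lam/(N:ℝ)^2 ≤ c N - 1 := hcl N
      have h2 : 2*(c N - 1) ≤ (a N)^2 * Real.exp (a N) := hdown N
      have h3 : (N:ℝ)^2 * (lam/(N:ℝ)^2) = lam := by field_simp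
      have h4 : 2*lam ≤ u N * Real.exp (a N) := by
        have := mul_le_mul_of_nonneg_left h2 hN0.le
        have h5 := mul_le_mul_of_nonneg_left h1 hN0.le
        simp only [hu]; nlinarith
      have he := Real.exp_pos (a N)
      rw [Real.exp_neg, ← div_eq_mul_inv, div_le_iff₀ he]
      exact h4
    · filter_upwards [eventually_ge_atTop 1] with N hN
      have hN0 : (0:ℝ) < (N:ℝ)^2 := by positivity
      have h1 : (a N)^2 ≤ 2*(c N - 1) := hup N
      have h2 : c N - 1 ≤ lam/(N:ℝ)^2 * c N := hcu N
      have h3 : (N:ℝ)^2 * (lam/(N:ℝ)^2) = lam := by field_simp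
      simp only [hu]
      have := mul_le_mul_of_nonneg_left h1 hN0.le
      nlinarith
  have hfin : Tendsto (fun N : ℕ => (N:ℝ) * a N) atTop (nhds (Real.sqrt (2*lam))) := by
    have := (Real.continuous_sqrt.tendsto (2*lam)).comp htu
    apply this.congr
    intro N
    simp only [Function.comp_apply, hu]
    exact Real.sqrt_sq (mul_nonneg (Nat.cast_nonneg N) (ha0 N))
  exact hfin


lemma measurable_sInf_mem {Ω : Type*} [MeasurableSpace Ω] (C : ℕ → Set Ω)
    (hC : ∀ n, MeasurableSet (C n)) :
    Measurable (fun ω => sInf {n : ℕ | ω ∈ C n}) := by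
  apply measurable_to_countable'
  intro m
  match m with
  | 0 =>
    have hset : (fun ω => sInf {n : ℕ | ω ∈ C n}) ⁻¹' {0}
        = C 0 ∪ ⋂ k, (C k)ᶜ := by
      ext ω
      simp only [Set.mem_preimage, Set.mem_singleton_iff, Set.mem_union, Set.mem_iInter,
        Set.mem_compl_iff, Nat.sInf_eq_zero, Set.mem_setOf_eq, Set.eq_empty_iff_forall_notMem]
    rw [hset]
    exact (hC 0).union (MeasurableSet.iInter fun k => (hC k).compl)
  | (m+1) =>
    have hset : (fun ω => sInf {n : ℕ | ω ∈ C n}) ⁻¹' {m+1}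
        = C (m+1) ∩ ⋂ k, ⋂ (_ : k < m+1), (C k)ᶜ := by
      ext ω
      simp only [Set.mem_preimage, Set.mem_singleton_iff, Set.mem_inter_iff, Set.mem_iInter,
        Set.mem_compl_iff]
      constructor
      · intro h
        have hne : Set.Nonempty {n : ℕ | ω ∈ C n} := by
          by_contra hne
          rw [Set.not_nonempty_iff_eq_empty] at hne
          rw [hne, Nat.sInf_empty] at h
          exact Nat.succ_ne_zero m h.symm
        have h1 := Nat.sInf_mem hne
        rw [h] at h1
        refine ⟨h1, fun k hk => Nat.notMem_of_lt_sInf (h ▸ hk)⟩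
      · rintro ⟨h1, h2⟩
        refine le_antisymm (Nat.sInf_le h1) ?_
        by_contra hlt
        push_neg at hlt
        have hmem : sInf {n : ℕ | ω ∈ C n} ∈ {n : ℕ | ω ∈ C n} :=
          Nat.sInf_mem (⟨m+1, h1⟩ : Set.Nonempty {n : ℕ | ω ∈ C n})
        exact h2 _ hlt hmem
    rw [hset]
    exact (hC (m+1)).inter
      (MeasurableSet.iInter fun k => MeasurableSet.iInter fun _ => (hC k).compl)

lemma measurable_bind_nat {Ω γ : Type*} [MeasurableSpace Ω] [MeasurableSpace γ]
    {h : Ω → ℕ} (hh : Measurable h) {g : ℕ → Ω → γ} (hg : ∀ n, Measurable (g n)) :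
    Measurable (fun ω => g (h ω) ω) := by
  intro U hU
  have hrw : (fun ω => g (h ω) ω) ⁻¹' U = ⋃ n, (h ⁻¹' {n} ∩ (g n) ⁻¹' U) := by
    ext ω
    simp only [Set.mem_preimage, Set.mem_iUnion, Set.mem_inter_iff, Set.mem_singleton_iff]
    exact ⟨fun hm => ⟨h ω, rfl, hm⟩, fun ⟨n, hn, hm⟩ => hn ▸ hm⟩
  rw [hrw]
  exact MeasurableSet.iUnion fun n => (hh (measurableSet_singleton n)).inter (hg n hU)

lemma integrable_bdd {Ω : Type*} [MeasurableSpace Ω] {P : Measure Ω} [IsFiniteMeasure P]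
    {f : Ω → ℝ} (hf : Measurable f) {C : ℝ} (h : ∀ ω, |f ω| ≤ C) : Integrable f P :=
  ⟨hf.aestronglyMeasurable,
    HasFiniteIntegral.of_bounded (C := C) (ae_of_all _ (by simpa [Real.norm_eq_abs] using h))⟩

section NoExit
variable {Ω : Type*} [MeasurableSpace Ω] (P : Measure Ω) [IsProbabilityMeasure P]
  (X : ℕ → Ω → ℤ)

/-- a.s. the walk exits (-N, N). -/
lemma srw_exit_as (hmeas : ∀ i, Measurable (X i))
    (hindep : iIndepFun X P)
    (hplus : ∀ i, P {ω | X i ω = 1} = 1/2)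
    (N : ℕ) (hN : 1 ≤ N) :
    P {ω | ∀ n, ¬ (N:ℤ) ≤ |∑ i ∈ Finset.range n, X i ω|} = 0 := by
  set S : ℕ → Ω → ℤ := fun n ω => ∑ i ∈ Finset.range n, X i ω with hSdef
  have hSmeas : ∀ n, Measurable (S n) := fun n => Finset.measurable_sum _ (fun i _ => hmeas i)
  -- the event of "no exit up to time 2*N*k"
  set Q : ℕ → Set Ω := fun k => {ω | ∀ m ≤ 2*N*k, ¬ (N:ℤ) ≤ |S m ω|} with hQdef
  have hQpre : ∀ k, Q k = ⋂ m, ⋂ (_ : m ≤ 2*N*k), (S m ⁻¹' {z : ℤ | (N:ℤ) ≤ |z|})ᶜ := by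
    intro k; ext ω
    simp only [hQdef, Set.mem_setOf_eq, Set.mem_iInter, Set.mem_compl_iff, Set.mem_preimage]
  have hQmeas : ∀ k, MeasurableSet (Q k) := by
    intro k
    rw [hQpre k]
    exact MeasurableSet.iInter fun m => MeasurableSet.iInter fun _ =>
      ((hSmeas m) ((Set.to_countable _).measurableSet)).compl
  -- all-ones block event
  set B : ℕ → Set Ω := fun k => ⋂ j ∈ Finset.Ico (2*N*k) (2*N*k + 2*N), X j ⁻¹' {1} with hBdef
  have hBmeas : ∀ k, MeasurableSet (B k) :=
    fun k => Finset.measurableSet_biInter _ fun j _ =>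
      (hmeas j) ((Set.to_countable _).measurableSet)
  -- probability of block
  have hBprob : ∀ k, P (B k) = (1/2 : ENNReal) ^ (2*N) := by
    intro k
    have := hindep.measure_inter_preimage_eq_mul (Finset.Ico (2*N*k) (2*N*k + 2*N))
      (sets := fun _ => ({1} : Set ℤ)) (fun j _ => (Set.to_countable _).measurableSet)
    rw [hBdef]
    rw [this]
    have heach : ∀ j, P (X j ⁻¹' ({1} : Set ℤ)) = 1/2 := by
      intro j
      have : X j ⁻¹' ({1} : Set ℤ) = {ω | X j ω = 1} := by
        ext ω; simp
      rw [this]; exact hplus j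
    rw [Finset.prod_congr rfl (fun j _ => heach j), Finset.prod_const, Nat.card_Ico]
    congr 1
    omega
  -- independence of Q k and B k
  have hind2 : ∀ k, P (Q k ∩ (B k)ᶜ) = P (Q k) * P ((B k)ᶜ) := by
    intro k
    have hdisj : Disjoint (Finset.range (2*N*k)) (Finset.Ico (2*N*k) (2*N*k + 2*N)) := by
      rw [Finset.disjoint_left]
      intro a ha hb
      simp only [Finset.mem_range] at ha
      simp only [Finset.mem_Ico] at hb
      omega
    have hIF := hindep.indepFun_finset (Finset.range (2*N*k))
      (Finset.Ico (2*N*k) (2*N*k + 2*N)) hdisj hmeas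
    set f : Ω → ((i : (Finset.range (2*N*k) : Finset ℕ)) → ℤ) :=
      fun ω i => X i ω with hf
    set g : Ω → ((j : (Finset.Ico (2*N*k) (2*N*k + 2*N) : Finset ℕ)) → ℤ) :=
      fun ω j => X j ω with hg
    set Uq : Set ((i : (Finset.range (2*N*k) : Finset ℕ)) → ℤ) :=
      {v | ∀ m ≤ 2*N*k, ¬ (N:ℤ) ≤ |∑ i ∈ (Finset.range (2*N*k)).attach,
        (if (i:ℕ) < m then v i else 0)|} with hUq
    set Ub : Set ((j : (Finset.Ico (2*N*k) (2*N*k + 2*N) : Finset ℕ)) → ℤ) :=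
      {w | ∀ j, w j = 1} with hUb
    have hQf : Q k = f ⁻¹' Uq := by
      ext ω
      simp only [hQdef, Set.mem_setOf_eq, Set.mem_preimage, hUq, hf]
      have hsum : ∀ m, m ≤ 2*N*k → (∑ i ∈ (Finset.range (2*N*k)).attach,
          (if (i:ℕ) < m then X (i:ℕ) ω else 0)) = S m ω := by
        intro m hm
        rw [Finset.sum_attach (Finset.range (2*N*k)) (fun i => if i < m then X i ω else 0)]
        rw [← Finset.sum_filter]
        have : (Finset.range (2*N*k)).filter (· < m) = Finset.range m := by
          ext i
          simp only [Finset.mem_filter, Finset.mem_range]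
          omega
        rw [this]
      constructor
      · intro h m hm; rw [hsum m hm]; exact h m hm
      · intro h m hm; have := h m hm; rwa [hsum m hm] at this
    have hBg : B k = g ⁻¹' Ub := by
      ext ω
      simp only [hBdef, Set.mem_iInter, Set.mem_preimage, hUb, Set.mem_setOf_eq, hg,
        Set.mem_singleton_iff]
      constructor
      · intro h j; exact h (j:ℕ) j.2
      · intro h j hj; exact h ⟨j, hj⟩
    rw [hQf, hBg, ← Set.preimage_compl]
    exact hIF.measure_inter_preimage_eq_mul _ _
      ((Set.to_countable _).measurableSet) ((Set.to_countable _).measurableSet)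
  -- containment
  have hsub : ∀ k, Q (k+1) ⊆ Q k ∩ (B k)ᶜ := by
    intro k ω hω
    constructor
    · intro m hm
      exact hω m (hm.trans (Nat.mul_le_mul_left _ (k.le_succ)))
    · intro hB
      simp only [hBdef, Set.mem_iInter, Set.mem_preimage, Set.mem_singleton_iff] at hB
      have hstep : ∀ d, d ≤ 2*N → S (2*N*k + d) ω = S (2*N*k) ω + d := by
        intro d
        induction d with
        | zero => intro _; simp
        | succ d ih =>
          intro hd
          have h1 : S (2*N*k + (d+1)) ω = S (2*N*k + d) ω + X (2*N*k + d) ω := by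
            show (∑ i ∈ Finset.range (2*N*k + d + 1), X i ω) = _
            rw [Finset.sum_range_succ]
          have h2 : X (2*N*k + d) ω = 1 := hB (2*N*k + d) (by simp [Finset.mem_Ico]; omega)
          rw [h1, h2, ih (by omega)]
          push_cast
          ring
      have hS0 : ¬ (N:ℤ) ≤ |S (2*N*k) ω| :=
        hω (2*N*k) (Nat.mul_le_mul_left _ k.le_succ)
      have hSend : S (2*N*k + 2*N) ω = S (2*N*k) ω + 2*(N:ℤ) := by
        have := hstep (2*N) le_rfl
        rw [this]; push_cast; ring
      have hfin : ¬ (N:ℤ) ≤ |S (2*N*k + 2*N) ω| :=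
        hω (2*N*k + 2*N) (le_of_eq (by ring))
      push_neg at hS0 hfin
      rw [hSend] at hfin
      have e1 : S (2*N*k) ω ≥ -|S (2*N*k) ω| := neg_abs_le _
      have e2 : S (2*N*k) ω + 2*(N:ℤ) ≤ |S (2*N*k) ω + 2*(N:ℤ)| := le_abs_self _
      have hN1 : (1:ℤ) ≤ (N:ℤ) := by exact_mod_cast hN
      linarith
  -- induction bound
  set eps : ENNReal := (1/2 : ENNReal) ^ (2*N) with heps
  have hQbound : ∀ k, P (Q k) ≤ (1 - eps) ^ k := by
    intro k
    induction k with
    | zero => simpa using prob_le_one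
    | succ k ih =>
      calc P (Q (k+1)) ≤ P (Q k ∩ (B k)ᶜ) := measure_mono (hsub k)
        _ = P (Q k) * P ((B k)ᶜ) := hind2 k
        _ = P (Q k) * (1 - eps) := by
            rw [measure_compl (hBmeas k) (measure_ne_top _ _), hBprob k, measure_univ]
        _ ≤ (1 - eps) ^ k * (1 - eps) := mul_le_mul_left ih _
        _ = (1 - eps) ^ (k+1) := by rw [pow_succ]
  -- conclude
  have hsubQ : {ω | ∀ n, ¬ (N:ℤ) ≤ |S n ω|} ⊆ ⋂ k, Q k := by
    intro ω hω
    simp only [Set.mem_iInter, hQdef, Set.mem_setOf_eq]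
    intro k m _
    exact hω m
  have heps0 : eps ≠ 0 := by
    rw [heps, one_div]
    exact pow_ne_zero _ (ENNReal.inv_ne_zero.2 (by norm_num))
  have hlt1 : (1 : ENNReal) - eps < 1 := ENNReal.sub_lt_self ENNReal.one_ne_top one_ne_zero heps0
  have htend : Tendsto (fun k => ((1:ENNReal) - eps) ^ k) atTop (nhds 0) :=
    ENNReal.tendsto_pow_atTop_nhds_zero_of_lt_one hlt1
  have hle : P {ω | ∀ n, ¬ (N:ℤ) ≤ |S n ω|} ≤ 0 := by
    apply ge_of_tendsto' htend
    intro k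
    exact le_trans (measure_mono (hsubQ.trans (Set.iInter_subset _ k))) (hQbound k)
  exact le_antisymm hle zero_le

end NoExit

lemma srw_key {Ω : Type*} [MeasurableSpace Ω] (P : Measure Ω) [IsProbabilityMeasure P]
    (X : ℕ → Ω → ℤ) (hmeas : ∀ i, Measurable (X i))
    (hindep : iIndepFun X P)
    (hplus : ∀ i, P {ω | X i ω = 1} = 1/2)
    (hminus : ∀ i, P {ω | X i ω = -1} = 1/2)
    (N : ℕ) (hN : 1 ≤ N) (α : ℝ) (hα : 0 < α) :
    ∫ ω, (Real.cosh α)⁻¹ ^ (sInf {n : ℕ | (N:ℤ) ≤ |∑ i ∈ Finset.range n, X i ω|}) ∂P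
      = (Real.cosh (α * N))⁻¹ := by
  classical
  set S : ℕ → Ω → ℤ := fun n ω => ∑ i ∈ Finset.range n, X i ω with hSdef
  have hSmeas : ∀ n, Measurable (S n) := fun n => Finset.measurable_sum _ (fun i _ => hmeas i)
  set A : Ω → Set ℕ := fun ω => {n : ℕ | (N:ℤ) ≤ |S n ω|} with hAdef
  set T : Ω → ℕ := fun ω => sInf (A ω) with hTdef
  set D : ℕ → Ω → ℕ := fun n ω => sInf (A ω ∪ Set.Ici n) with hDdef
  set cl : ℤ → ℤ := fun z => max (-(N:ℤ)) (min (N:ℤ) z) with hcldef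
  set r : ℝ := (Real.cosh α)⁻¹ with hrdef
  set M : ℕ → Ω → ℝ :=
    fun n ω => Real.cosh (α * ((cl (S (D n ω) ω) : ℤ) : ℝ)) * r ^ (D n ω) with hMdef
  -- basic facts about r
  have hcosh1 : 1 ≤ Real.cosh α := Real.one_le_cosh α
  have hcoshpos : 0 < Real.cosh α := lt_of_lt_of_le one_pos hcosh1
  have hr0 : 0 < r := inv_pos.2 hcoshpos
  have hrc : r * Real.cosh α = 1 := inv_mul_cancel₀ hcoshpos.ne'
  have hr1 : r ≤ 1 := by nlinarith
  -- clamping bound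
  have hclbd : ∀ z : ℤ, |cl z| ≤ (N:ℤ) := by
    intro z
    rw [abs_le]
    constructor
    · exact le_max_left _ _
    · exact max_le (by omega) (min_le_left _ _)
  have hclid : ∀ z : ℤ, |z| ≤ (N:ℤ) → cl z = z := by
    intro z hz
    rw [abs_le] at hz
    show max (-(N:ℤ)) (min (N:ℤ) z) = z
    rw [min_eq_right hz.2, max_eq_right hz.1]
  have hcoshbd : ∀ z : ℤ, |z| ≤ (N:ℤ) → |Real.cosh (α * (z:ℝ))| ≤ Real.cosh (α * N) := by
    intro z hz
    rw [abs_of_pos (Real.cosh_pos _)]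
    apply Real.cosh_le_cosh.2
    rw [abs_mul, abs_mul, abs_of_pos hα]
    apply mul_le_mul_of_nonneg_left _ hα.le
    rw [abs_of_nonneg (by positivity : (0:ℝ) ≤ (N:ℝ))]
    rw [← Int.cast_abs]
    exact_mod_cast hz
  -- measurability
  have hCmeas : ∀ n, MeasurableSet {ω | (N:ℤ) ≤ |S n ω|} := by
    intro n
    exact (hSmeas n) ((Set.to_countable {z : ℤ | (N:ℤ) ≤ |z|}).measurableSet)
  have hTmeas : Measurable T :=
    measurable_sInf_mem (fun n => {ω | (N:ℤ) ≤ |S n ω|}) hCmeas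
  have hDmeas : ∀ n, Measurable (D n) := by
    intro n
    have heq : D n = fun ω => sInf {k : ℕ |
        ω ∈ ({ω' | (N:ℤ) ≤ |S k ω'|} ∪ (if n ≤ k then Set.univ else ∅))} := by
      funext ω
      rw [hDdef]
      apply congrArg
      ext k
      by_cases h : n ≤ k <;> simp [hAdef, h, Set.mem_Ici]
    rw [heq]
    exact measurable_sInf_mem _ (fun k => (hCmeas k).union (by split <;> simp))
  have hMmeas : ∀ n, Measurable (M n) := by
    intro n
    apply Measurable.mul
    · apply (Real.continuous_cosh.measurable).comp
      apply Measurable.const_mul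
      have h1 : Measurable (fun ω => S (D n ω) ω) :=
        measurable_bind_nat (hDmeas n) (fun m => hSmeas m)
      exact (measurable_of_countable (fun z : ℤ => ((cl z : ℤ) : ℝ))).comp h1
    · exact (measurable_of_countable (fun k : ℕ => r ^ k)).comp (hDmeas n)
  -- uniform bound
  have hMbd : ∀ n ω, |M n ω| ≤ Real.cosh (α * N) := by
    intro n ω
    rw [hMdef, abs_mul]
    calc |Real.cosh (α * ((cl (S (D n ω) ω) : ℤ) : ℝ))| * |r ^ (D n ω)|
        ≤ Real.cosh (α * N) * 1 := by
          apply mul_le_mul (hcoshbd _ (hclbd _)) _ (abs_nonneg _) (Real.cosh_pos _).le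
          rw [abs_of_nonneg (pow_nonneg hr0.le _)]
          exact pow_le_one₀ hr0.le hr1
      _ = Real.cosh (α * N) := mul_one _
  -- facts about D
  have hD_le : ∀ n ω, D n ω ≤ n := fun n ω => Nat.sInf_le (Or.inr (Set.mem_Ici.2 le_rfl))
  have hD_hit : ∀ n ω k, k ∈ A ω → k ≤ n → D n ω = T ω := by
    intro n ω k hk hkn
    have hne : (A ω).Nonempty := ⟨k, hk⟩
    have hT_mem : T ω ∈ A ω := Nat.sInf_mem hne
    apply le_antisymm
    · exact Nat.sInf_le (Or.inl hT_mem)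
    · have hD_mem : D n ω ∈ A ω ∪ Set.Ici n := Nat.sInf_mem ⟨k, Or.inl hk⟩
      rcases hD_mem with h | h
      · exact Nat.sInf_le h
      · have hDk : D n ω ≤ k := Nat.sInf_le (Or.inl hk)
        have : T ω ≤ k := Nat.sInf_le hk
        simp only [Set.mem_Ici] at h
        omega
  have hD_nohit : ∀ n ω, (∀ k ≤ n, k ∉ A ω) → D n ω = n := by
    intro n ω hno
    apply le_antisymm (hD_le n ω)
    apply le_csInf ⟨n, Or.inr (Set.mem_Ici.2 le_rfl)⟩
    rintro m (hm | hm)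
    · by_contra hlt
      push_neg at hlt
      exact hno m (by omega) hm
    · exact hm
  -- a.s. each step is ±1
  have haeX : ∀ i, ∀ᵐ ω ∂P, X i ω = 1 ∨ X i ω = -1 := by
    intro i
    have hm1 : MeasurableSet {ω | X i ω = 1} :=
      (hmeas i) (show MeasurableSet {z : ℤ | z = 1} from (Set.to_countable _).measurableSet)
    have hm2 : MeasurableSet {ω | X i ω = -1} :=
      (hmeas i) (show MeasurableSet {z : ℤ | z = -1} from (Set.to_countable _).measurableSet)
    have hdisj : Disjoint {ω | X i ω = 1} {ω | X i ω = -1} := by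
      rw [Set.disjoint_left]
      intro ω h1 h2
      simp only [Set.mem_setOf_eq] at h1 h2
      rw [h1] at h2
      exact absurd h2 (by decide)
    have hun : P ({ω | X i ω = 1} ∪ {ω | X i ω = -1}) = 1 := by
      rw [measure_union hdisj hm2, hplus i, hminus i]
      rw [ENNReal.div_add_div_same]
      have h2 : (1+1 : ENNReal) = 2 := by norm_num
      rw [h2, ENNReal.div_self two_ne_zero ENNReal.ofNat_ne_top]
    rw [ae_iff]
    have : {ω | ¬(X i ω = 1 ∨ X i ω = -1)} = ({ω | X i ω = 1} ∪ {ω | X i ω = -1})ᶜ := by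
      ext ω; simp [not_or]
    rw [this, measure_compl (hm1.union hm2) (measure_ne_top _ _), hun, measure_univ]
    simp
  -- the martingale identity
  have hM1 : ∀ n, ∫ ω, M n ω ∂P = 1 := by
    intro n
    induction n with
    | zero =>
      have : ∀ ω, M 0 ω = 1 := by
        intro ω
        have hD0 : D 0 ω = 0 := Nat.le_antisymm (hD_le 0 ω) (Nat.zero_le _)
        simp only [hMdef]
        simp only [hD0]
        have hS0 : S 0 ω = 0 := by simp [hSdef]
        rw [hS0]
        have : cl 0 = 0 := hclid 0 (by simp)
        rw [this]
        norm_num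
      rw [integral_congr_ae (ae_of_all _ (fun ω => this ω))]
      simp
    | succ n ih =>
      -- the event "no exit up to time n"
      set Bc : Set Ω := {ω | ∀ k ≤ n, ¬ (N:ℤ) ≤ |S k ω|} with hBcdef
      have hBcmeas : MeasurableSet Bc := by
        have : Bc = ⋂ k, ⋂ (_ : k ≤ n), {ω | (N:ℤ) ≤ |S k ω|}ᶜ := by
          ext ω; simp [hBcdef]
        rw [this]
        exact MeasurableSet.iInter fun k => MeasurableSet.iInter fun _ => (hCmeas k).compl
      have hBc_D : ∀ ω ∈ Bc, D n ω = n ∧ D (n+1) ω = n+1 := by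
        intro ω hω
        simp only [hBcdef, Set.mem_setOf_eq] at hω
        constructor
        · exact hD_nohit n ω (fun k hk hmem => hω k hk hmem)
        · apply le_antisymm (hD_le _ _)
          apply le_csInf ⟨n+1, Or.inr (Set.mem_Ici.2 le_rfl)⟩
          rintro m (hm | hm)
          · by_contra hlt; push_neg at hlt
            exact hω m (by omega) hm
          · exact hm
      have hnotBc_D : ∀ ω, ω ∉ Bc → D n ω = T ω ∧ D (n+1) ω = T ω := by
        intro ω hω
        simp only [hBcdef, Set.mem_setOf_eq] at hω
        push_neg at hω
        obtain ⟨k, hk, hmem⟩ := hω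
        exact ⟨hD_hit n ω k hmem hk, hD_hit (n+1) ω k hmem (by omega)⟩
      -- the increment
      set g : Ω → ℝ := fun ω => if ω ∈ Bc then
          Real.cosh (α * ((cl (S n ω + X n ω) : ℤ) : ℝ)) * r ^ (n+1)
          - Real.cosh (α * ((S n ω : ℤ) : ℝ)) * r ^ n else 0 with hgdef
      have hdecomp : ∀ ω, M (n+1) ω = M n ω + g ω := by
        intro ω
        by_cases hB : ω ∈ Bc
        · obtain ⟨h1, h2⟩ := hBc_D ω hB
          have hS1 : S (n+1) ω = S n ω + X n ω := Finset.sum_range_succ _ _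
          have hcln : cl (S n ω) = S n ω := by
            apply hclid
            simp only [hBcdef, Set.mem_setOf_eq] at hB
            have := hB n le_rfl
            omega
          simp only [hMdef]
          simp only [h1, h2, hgdef, if_pos hB]
          rw [hS1, hcln]
          ring
        · obtain ⟨h1, h2⟩ := hnotBc_D ω hB
          simp only [hMdef]
          simp only [h1, h2, hgdef, if_neg hB]
          ring
      -- measurability and boundedness of g
      have hgmeas : Measurable g := by
        have : g = Bc.indicator (fun ω =>
            Real.cosh (α * ((cl (S n ω + X n ω) : ℤ) : ℝ)) * r ^ (n+1)
            - Real.cosh (α * ((S n ω : ℤ) : ℝ)) * r ^ n) := by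
          funext ω; simp only [hgdef]; simp [Set.indicator_apply]
        rw [this]
        apply Measurable.indicator _ hBcmeas
        apply Measurable.sub
        · exact ((measurable_of_countable
            (fun z : ℤ => Real.cosh (α * ((cl z : ℤ) : ℝ)) * r ^ (n+1))).comp
            ((hSmeas n).add (hmeas n)))
        · exact ((measurable_of_countable
            (fun z : ℤ => Real.cosh (α * ((z : ℤ) : ℝ)) * r ^ n)).comp (hSmeas n))
      have habs_r : ∀ m : ℕ, |r ^ m| ≤ 1 := by
        intro m
        rw [abs_of_nonneg (pow_nonneg hr0.le _)]
        exact pow_le_one₀ hr0.le hr1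
      have hterm_bd : ∀ (z : ℤ) (m : ℕ), |z| ≤ (N:ℤ) →
          |Real.cosh (α * ((z : ℤ) : ℝ)) * r ^ m| ≤ Real.cosh (α * N) := by
        intro z m hz
        rw [abs_mul]
        calc |Real.cosh (α * ((z:ℤ):ℝ))| * |r ^ m| ≤ Real.cosh (α * N) * 1 :=
              mul_le_mul (hcoshbd z hz) (habs_r m) (abs_nonneg _) (Real.cosh_pos _).le
          _ = Real.cosh (α * N) := mul_one _
      have hSnbd : ∀ ω, ω ∈ Bc → |S n ω| ≤ (N:ℤ) := by
        intro ω hB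
        simp only [hBcdef, Set.mem_setOf_eq] at hB
        have := hB n le_rfl
        omega
      have hgbd : ∀ ω, |g ω| ≤ 2 * Real.cosh (α * N) := by
        intro ω
        simp only [hgdef]
        by_cases hB : ω ∈ Bc
        · rw [if_pos hB]
          calc |_ - _| ≤ |Real.cosh (α * ((cl (S n ω + X n ω) : ℤ) : ℝ)) * r ^ (n+1)|
              + |Real.cosh (α * ((S n ω : ℤ) : ℝ)) * r ^ n| := abs_sub _ _
            _ ≤ Real.cosh (α * N) + Real.cosh (α * N) := add_le_add
                (hterm_bd _ _ (hclbd _)) (hterm_bd _ _ (hSnbd ω hB))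
            _ = 2 * Real.cosh (α * N) := by ring
        · rw [if_neg hB]
          simp only [abs_zero]
          positivity
      -- F and G
      set F : ℤ → Ω → ℝ := fun x ω => if ω ∈ Bc then
          Real.cosh (α * ((cl (S n ω + x) : ℤ) : ℝ)) * r ^ (n+1)
          - Real.cosh (α * ((S n ω : ℤ) : ℝ)) * r ^ n else 0 with hFdef
      set G : ℤ → Ω → ℝ := fun x ω => if X n ω = x then (1:ℝ) else 0 with hGdef
      have hFmeas : ∀ x, Measurable (F x) := by
        intro x
        have : F x = Bc.indicator (fun ω =>
            (fun z : ℤ => Real.cosh (α * ((cl (z + x) : ℤ) : ℝ)) * r ^ (n+1)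
            - Real.cosh (α * ((z : ℤ) : ℝ)) * r ^ n) (S n ω)) := by
          funext ω; simp only [hFdef]; simp [Set.indicator_apply]
        rw [this]
        have hinner : Measurable (fun ω => (fun z : ℤ =>
            Real.cosh (α * ((cl (z + x) : ℤ) : ℝ)) * r ^ (n+1)
            - Real.cosh (α * ((z : ℤ) : ℝ)) * r ^ n) (S n ω)) :=
          (measurable_of_countable (fun z : ℤ =>
            Real.cosh (α * ((cl (z + x) : ℤ) : ℝ)) * r ^ (n+1)
            - Real.cosh (α * ((z : ℤ) : ℝ)) * r ^ n)).comp (hSmeas n)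
        exact Measurable.indicator hinner hBcmeas
      have hGmeas : ∀ x, Measurable (G x) := by
        intro x
        exact (measurable_of_countable (fun z : ℤ => if z = x then (1:ℝ) else 0)).comp (hmeas n)
      have hFbd : ∀ x ω, |F x ω| ≤ 2 * Real.cosh (α * N) := by
        intro x ω
        simp only [hFdef]
        by_cases hB : ω ∈ Bc
        · rw [if_pos hB]
          calc |_ - _| ≤ |Real.cosh (α * ((cl (S n ω + x) : ℤ) : ℝ)) * r ^ (n+1)|
              + |Real.cosh (α * ((S n ω : ℤ) : ℝ)) * r ^ n| := abs_sub _ _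
            _ ≤ Real.cosh (α * N) + Real.cosh (α * N) := add_le_add
                (hterm_bd _ _ (hclbd _)) (hterm_bd _ _ (hSnbd ω hB))
            _ = 2 * Real.cosh (α * N) := by ring
        · rw [if_neg hB]
          simp only [abs_zero]
          positivity
      have hGbd : ∀ x ω, |G x ω| ≤ 1 := by
        intro x ω
        simp only [hGdef]
        split <;> simp
      have intF : ∀ x, Integrable (F x) P := fun x => integrable_bdd (hFmeas x) (hFbd x)
      have intG : ∀ x, Integrable (G x) P := fun x => integrable_bdd (hGmeas x) (hGbd x)
      have intFG : ∀ x, Integrable (fun ω => F x ω * G x ω) P := by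
        intro x
        apply integrable_bdd ((hFmeas x).mul (hGmeas x)) (C := 2 * Real.cosh (α * N))
        intro ω
        rw [Pi.mul_apply, abs_mul]
        calc |F x ω| * |G x ω| ≤ (2 * Real.cosh (α * N)) * 1 :=
              mul_le_mul (hFbd x ω) (hGbd x ω) (abs_nonneg _) (by positivity)
          _ = 2 * Real.cosh (α * N) := mul_one _
      -- a.e. decomposition of g
      have hae_eq : g =ᵐ[P] (fun ω => F 1 ω * G 1 ω + F (-1) ω * G (-1) ω) := by
        filter_upwards [haeX n] with ω hX
        rcases hX with h | h <;>
          simp only [hgdef, hFdef, hGdef, h] <;> norm_num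
      -- independence
      have hdisjFin : Disjoint (Finset.range n) ({n} : Finset ℕ) := by simp
      have hIF := hindep.indepFun_finset (Finset.range n) {n} hdisjFin hmeas
      set SS : ℕ → ((i : (Finset.range n : Finset ℕ)) → ℤ) → ℤ :=
        fun k v => ∑ i ∈ (Finset.range n).attach, (if (i:ℕ) < k then v i else 0) with hSS
      set tup : Ω → ((i : (Finset.range n : Finset ℕ)) → ℤ) := fun ω i => X i ω with htup
      set tup2 : Ω → ((j : ({n} : Finset ℕ)) → ℤ) := fun ω j => X j ω with htup2
      have hSSeq : ∀ (k : ℕ) (ω : Ω), k ≤ n → SS k (tup ω) = S k ω := by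
        intro k ω hk
        simp only [hSS, htup]
        show (∑ i ∈ (Finset.range n).attach, (if (i:ℕ) < k then X (i:ℕ) ω else 0)) = S k ω
        rw [Finset.sum_attach (Finset.range n) (fun i => if i < k then X i ω else 0)]
        rw [← Finset.sum_filter]
        have : (Finset.range n).filter (· < k) = Finset.range k := by
          ext i
          simp only [Finset.mem_filter, Finset.mem_range]
          omega
        rw [this]
      set φ : ℤ → ((i : (Finset.range n : Finset ℕ)) → ℤ) → ℝ := fun x v =>
        if (∀ k ≤ n, ¬ (N:ℤ) ≤ |SS k v|) then
          Real.cosh (α * ((cl (SS n v + x) : ℤ) : ℝ)) * r ^ (n+1)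
          - Real.cosh (α * ((SS n v : ℤ) : ℝ)) * r ^ n else 0 with hφ
      set ψ : ℤ → ((j : ({n} : Finset ℕ)) → ℤ) → ℝ := fun x w =>
        if w ⟨n, Finset.mem_singleton_self n⟩ = x then (1:ℝ) else 0 with hψ
      have hFeq : ∀ x, F x = (φ x) ∘ tup := by
        intro x
        funext ω
        simp only [Function.comp_apply]
        by_cases hB : ω ∈ Bc
        · have hB2 : ∀ k ≤ n, ¬ (N:ℤ) ≤ |S k ω| := hB
          have hB' : (∀ k ≤ n, ¬ (N:ℤ) ≤ |SS k (tup ω)|) := by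
            intro k hk; rw [hSSeq k ω hk]; exact hB2 k hk
          simp only [hFdef, hφ]
          simp only [if_pos hB, if_pos hB', hSSeq n ω le_rfl]
        · have hB' : ¬ (∀ k ≤ n, ¬ (N:ℤ) ≤ |SS k (tup ω)|) := by
            intro hc
            apply hB
            intro k hk
            have := hc k hk; rwa [hSSeq k ω hk] at this
          simp only [hFdef, hφ]
          simp only [if_neg hB, if_neg hB']
      have hGeq : ∀ x, G x = (ψ x) ∘ tup2 := by
        intro x; funext ω; rfl
      have hFG : ∀ x : ℤ, IndepFun (F x) (G x) P := by
        intro x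
        rw [hFeq x, hGeq x]
        exact hIF.comp (measurable_of_countable _) (measurable_of_countable _)
      have hmul : ∀ x : ℤ, ∫ ω, F x ω * G x ω ∂P = (∫ ω, F x ω ∂P) * (∫ ω, G x ω ∂P) :=
        fun x => (hFG x).integral_fun_mul_eq_mul_integral (intF x).1 (intG x).1
      have hintG : ∀ x : ℤ, P {ω | X n ω = x} = 1/2 → ∫ ω, G x ω ∂P = 1/2 := by
        intro x hx
        have : G x = Set.indicator {ω | X n ω = x} (fun _ => (1:ℝ)) := by
          funext ω; simp only [hGdef]; simp [Set.indicator_apply]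
        rw [this, integral_indicator_const _
          (show MeasurableSet {ω | X n ω = x} from
            (hmeas n) (show MeasurableSet {z : ℤ | z = x} from (Set.to_countable _).measurableSet))]
        rw [measureReal_def, hx]
        simp [ENNReal.toReal_div]
      -- pointwise cancellation
      have hFsum : ∀ ω, F 1 ω + F (-1) ω = 0 := by
        intro ω
        simp only [hFdef]
        by_cases hB : ω ∈ Bc
        · simp only [if_pos hB]
          have hSn : |S n ω| ≤ (N:ℤ) - 1 := by
            have hB2 : ∀ k ≤ n, ¬ (N:ℤ) ≤ |S k ω| := hB
            have := hB2 n le_rfl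
            omega
          have habs := abs_le.1 hSn
          have hcl1 : cl (S n ω + 1) = S n ω + 1 := hclid _ (by rw [abs_le]; omega)
          have hcl2 : cl (S n ω + -1) = S n ω + -1 := hclid _ (by rw [abs_le]; omega)
          rw [hcl1, hcl2]
          have hc1 : ((S n ω + 1 : ℤ) : ℝ) = ((S n ω : ℤ) : ℝ) + 1 := by push_cast; ring
          have hc2 : ((S n ω + -1 : ℤ) : ℝ) = ((S n ω : ℤ) : ℝ) - 1 := by push_cast; ring
          rw [hc1, hc2]
          have e1 : α * (((S n ω : ℤ) : ℝ) + 1) = α * ((S n ω : ℤ) : ℝ) + α := by ring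
          have e2 : α * (((S n ω : ℤ) : ℝ) - 1) = α * ((S n ω : ℤ) : ℝ) - α := by ring
          rw [e1, e2, Real.cosh_add, Real.cosh_sub, pow_succ]
          linear_combination (2 * Real.cosh (α * ((S n ω : ℤ) : ℝ)) * r ^ n) * hrc
        · simp only [if_neg hB]
          ring
      have hintFsum : (∫ ω, F 1 ω ∂P) + (∫ ω, F (-1) ω ∂P) = 0 := by
        rw [← integral_add (intF 1) (intF (-1))]
        simp only [hFsum, integral_zero]
      -- conclusion of the step
      have hgzero : ∫ ω, g ω ∂P = 0 := by
        rw [integral_congr_ae hae_eq, integral_add (intFG 1) (intFG (-1)),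
          hmul 1, hmul (-1), hintG 1 (hplus n), hintG (-1) (hminus n)]
        linarith
      have intMn : Integrable (M n) P := integrable_bdd (hMmeas n) (hMbd n)
      calc ∫ ω, M (n+1) ω ∂P = ∫ ω, (M n ω + g ω) ∂P := by
            apply integral_congr_ae (ae_of_all _ hdecomp)
        _ = (∫ ω, M n ω ∂P) + ∫ ω, g ω ∂P :=
            integral_add intMn (integrable_bdd hgmeas hgbd)
        _ = 1 + 0 := by rw [ih, hgzero]
        _ = 1 := by norm_num
  
  -- identification of the limit
  have hlim : ∀ᵐ ω ∂P, Tendsto (fun n => M n ω) atTop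
      (nhds (Real.cosh (α * N) * r ^ (T ω))) := by
    have hexit : ∀ᵐ ω ∂P, ∃ n, (N:ℤ) ≤ |S n ω| := by
      rw [ae_iff]
      have hset : {ω | ¬ ∃ n, (N:ℤ) ≤ |S n ω|}
          = {ω | ∀ n, ¬ (N:ℤ) ≤ |∑ i ∈ Finset.range n, X i ω|} := by
        ext ω
        simp only [Set.mem_setOf_eq, not_exists]; rfl
      rw [hset]
      exact srw_exit_as P X hmeas hindep hplus N hN
    have hall : ∀ᵐ ω ∂P, ∀ i, X i ω = 1 ∨ X i ω = -1 := ae_all_iff.2 haeX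
    filter_upwards [hexit, hall] with ω hex hpm
    have hne : (A ω).Nonempty := hex
    have hTmem : T ω ∈ A ω := Nat.sInf_mem hne
    have hT0 : T ω ≠ 0 := by
      intro h0
      have hmem0 : (0:ℕ) ∈ A ω := h0 ▸ hTmem
      have hS0 : S 0 ω = 0 := by simp [hSdef]
      have : (N:ℤ) ≤ |S 0 ω| := hmem0
      rw [hS0] at this
      simp only [abs_zero] at this
      omega
    obtain ⟨t, ht⟩ : ∃ t, T ω = t + 1 :=
      ⟨T ω - 1, (Nat.succ_pred_eq_of_pos (Nat.pos_of_ne_zero hT0)).symm⟩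
    have hprev : t ∉ A ω := by
      apply Nat.notMem_of_lt_sInf
      show t < sInf (A ω)
      have : sInf (A ω) = t + 1 := ht
      omega
    have hstep : S (t+1) ω = S t ω + X t ω := Finset.sum_range_succ _ _
    have hXpm : X t ω = 1 ∨ X t ω = -1 := hpm t
    have hXabs : |X t ω| = 1 := by rcases hXpm with h | h <;> rw [h] <;> simp
    have hSt : |S t ω| ≤ (N:ℤ) - 1 := by
      have : ¬ (N:ℤ) ≤ |S t ω| := hprev
      omega
    have hST : |S (T ω) ω| = (N:ℤ) := by
      have h1 : (N:ℤ) ≤ |S (T ω) ω| := hTmem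
      apply le_antisymm _ h1
      rw [ht, hstep]
      calc |S t ω + X t ω| ≤ |S t ω| + |X t ω| := abs_add_le _ _
        _ ≤ ((N:ℤ) - 1) + 1 := add_le_add hSt (le_of_eq hXabs)
        _ = (N:ℤ) := by ring
    have hclT : cl (S (T ω) ω) = S (T ω) ω := hclid _ (le_of_eq hST)
    have hDT : ∀ n, T ω ≤ n → D n ω = T ω := by
      intro n hn
      apply le_antisymm (Nat.sInf_le (Or.inl hTmem))
      apply le_csInf ⟨T ω, Or.inl hTmem⟩
      rintro m (hm | hm)
      · exact Nat.sInf_le hm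
      · exact le_trans hn hm
    have hcoshT : Real.cosh (α * ((S (T ω) ω : ℤ) : ℝ)) = Real.cosh (α * N) := by
      have habs : |((S (T ω) ω : ℤ) : ℝ)| = (N:ℝ) := by
        rw [← Int.cast_abs, hST]
        simp
      calc Real.cosh (α * ((S (T ω) ω : ℤ) : ℝ))
          = Real.cosh (|α * ((S (T ω) ω : ℤ) : ℝ)|) := (Real.cosh_abs _).symm
        _ = Real.cosh (α * N) := by rw [abs_mul, abs_of_pos hα, habs]
    apply tendsto_atTop_of_eventually_const (i₀ := T ω)
    intro n hn
    simp only [hMdef, hDT n hn, hclT, hcoshT]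
  -- dominated convergence
  have hDCT := tendsto_integral_of_dominated_convergence
      (F := M) (f := fun ω => Real.cosh (α * N) * r ^ (T ω))
      (bound := fun _ => Real.cosh (α * N))
      (fun n => (hMmeas n).aestronglyMeasurable)
      (integrable_const _)
      (fun n => ae_of_all _ (fun ω => by rw [Real.norm_eq_abs]; exact hMbd n ω))
      hlim
  have hconst : Tendsto (fun n => ∫ ω, M n ω ∂P) atTop (nhds 1) := by
    have : (fun n => ∫ ω, M n ω ∂P) = fun _ => (1:ℝ) := funext hM1
    rw [this]
    exact tendsto_const_nhds
  have hkey : ∫ ω, Real.cosh (α * N) * r ^ (T ω) ∂P = 1 :=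
    tendsto_nhds_unique hDCT hconst
  rw [integral_const_mul] at hkey
  have hne0 : Real.cosh (α * (N:ℝ)) ≠ 0 := (Real.cosh_pos _).ne'
  have hgoal : ∫ ω, r ^ (T ω) ∂P = (Real.cosh (α * N))⁻¹ := by
    rw [← one_div, eq_div_iff hne0, mul_comm]
    exact hkey
  exact hgoal


/-- For the simple symmetric random walk on ℤ started at 0, with
`T_N = inf{n : |S_n| ≥ N}` the exit time from `(-N,N)`, the rescaled time `T_N/N²`
converges in distribution to the exit time of standard Brownian motion from `(-1,1)`;
in particular the Laplace transform `E[exp(-λ T_N/N²)]` converges to `1/cosh(√(2λ))`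
for every `λ > 0`. -/
theorem srw_exit_time_scaling_limit
    {Ω : Type*} [MeasurableSpace Ω] (P : Measure Ω) [IsProbabilityMeasure P]
    (X : ℕ → Ω → ℤ) (hmeas : ∀ i, Measurable (X i))
    (hindep : iIndepFun X P)
    (hplus : ∀ i, P {ω | X i ω = 1} = 1/2)
    (hminus : ∀ i, P {ω | X i ω = -1} = 1/2)
    (S : ℕ → Ω → ℤ) (hS : ∀ n ω, S n ω = ∑ i ∈ Finset.range n, X i ω)
    (T : ℕ → Ω → ℕ) (hT : ∀ N ω, T N ω = sInf {n : ℕ | (N : ℤ) ≤ |S n ω|})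
    (lam : ℝ) (hlam : 0 < lam) :
    Tendsto (fun N : ℕ => ∫ ω, Real.exp (-lam * (T N ω : ℝ) / (N : ℝ) ^ 2) ∂P)
      atTop (nhds (1 / Real.cosh (Real.sqrt (2 * lam)))) := by
  set c : ℕ → ℝ := fun N => Real.exp (lam/(N:ℝ)^2) with hc
  set a : ℕ → ℝ := fun N => Real.log (c N + Real.sqrt ((c N)^2 - 1)) with ha
  -- for N ≥ 1 the integral is computed exactly by srw_key
  have hint : ∀ N : ℕ, 1 ≤ N → (∫ ω, Real.exp (-lam * (T N ω : ℝ) / (N : ℝ) ^ 2) ∂P)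
      = (Real.cosh (a N * N))⁻¹ := by
    intro N hN
    have hNne : ((N:ℝ)) ≠ 0 := by positivity
    have hN2 : (0:ℝ) < (N:ℝ)^2 := by positivity
    have hc1 : 1 < c N := by
      rw [hc]
      calc (1:ℝ) = Real.exp 0 := Real.exp_zero.symm
        _ < Real.exp (lam/(N:ℝ)^2) := Real.exp_lt_exp.2 (div_pos hlam hN2)
    have hca : Real.cosh (a N) = c N := cosh_log_eq (c N) hc1.le
    have ha0 : 0 < a N := by
      rw [ha]
      apply Real.log_pos
      nlinarith [Real.sqrt_nonneg ((c N)^2 - 1)]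
    have hpt : ∀ ω, Real.exp (-lam * (T N ω : ℝ) / (N : ℝ) ^ 2)
        = (Real.cosh (a N))⁻¹ ^ (T N ω) := by
      intro ω
      rw [hca]
      simp only [hc]
      rw [← Real.exp_neg, ← Real.exp_nat_mul]
      congr 1
      field_simp
    have hsetEq : ∀ ω, {n : ℕ | (N:ℤ) ≤ |S n ω|}
        = {n : ℕ | (N:ℤ) ≤ |∑ i ∈ Finset.range n, X i ω|} := by
      intro ω; ext n; simp only [Set.mem_setOf_eq, hS]
    calc ∫ ω, Real.exp (-lam * (T N ω : ℝ) / (N : ℝ) ^ 2) ∂P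
        = ∫ ω, (Real.cosh (a N))⁻¹
            ^ (sInf {n : ℕ | (N:ℤ) ≤ |∑ i ∈ Finset.range n, X i ω|}) ∂P := by
          apply integral_congr_ae (ae_of_all _ _)
          intro ω
          rw [hpt ω, hT N ω, hsetEq ω]
      _ = (Real.cosh (a N * N))⁻¹ :=
          srw_key P X hmeas hindep hplus hminus N hN (a N) ha0
  -- the analytic limit
  have htendsto : Tendsto (fun N : ℕ => (Real.cosh ((N:ℝ) * a N))⁻¹) atTop
      (nhds (1 / Real.cosh (Real.sqrt (2*lam)))) := by
    have h1 : Tendsto (fun N : ℕ => (N:ℝ) * a N) atTop (nhds (Real.sqrt (2*lam))) :=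
      tendsto_n_arcosh lam hlam
    have h2 := (Real.continuous_cosh.tendsto _).comp h1
    rw [one_div]
    exact h2.inv₀ (Real.cosh_pos _).ne'
  apply Tendsto.congr' _ htendsto
  filter_upwards [eventually_ge_atTop 1] with N hN
  rw [hint N hN, mul_comm]
end
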